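/- arXiv:2404.03747 — 7 statements merged into one kernel-verified Lean document; each statement's English description precedes it below -/
import Mathlib

section
/- Let M = (E, 𝓘) be a matroid, let I ∈ 𝓘, let A ⊆ I and B ⊆ E \ I with |A| = |B|, and suppose (I \ A) ∪ B ∈ 𝓘. Then: (1) for every A' ⊆ A there exists B' ⊆ B with |A'| = |B'| and (I \ A') ∪ B' ∈ 𝓘; and (2) for every B' ⊆ B there exists A' ⊆ A with |A'| = |B'| and (I \ A') ∪ B' ∈ 𝓘. -/
/-- A matroid on a finite ground set `E`, given by its family of independent sets. -/
structure FinMatroid (E : Type*) [DecidableEq E] where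
  Indep : Finset E → Prop
  empty_indep : Indep ∅
  subset_indep : ∀ ⦃X Y : Finset E⦄, X ⊆ Y → Indep Y → Indep X
  exchange : ∀ ⦃X Y : Finset E⦄, Indep X → Indep Y → X.card < Y.card →
    ∃ e ∈ Y \ X, Indep (insert e X)

/-- Augmentation: an independent set can be grown to the size of a larger independent
set using elements from it. -/
lemma FinMatroid.augment {E : Type*} [DecidableEq E] (M : FinMatroid E) :
    ∀ (n : ℕ) (X Y : Finset E), M.Indep X → M.Indep Y → X.card + n = Y.card →
    ∃ S ⊆ Y \ X, S.card = n ∧ M.Indep (X ∪ S) := by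
  intro n
  induction n with
  | zero =>
    intro X Y hX _ _
    exact ⟨∅, Finset.empty_subset _, rfl, by simpa using hX⟩
  | succ k ih =>
    intro X Y hX hY hcard
    obtain ⟨e, heYX, hins⟩ := M.exchange hX hY (by omega)
    have heY := (Finset.mem_sdiff.mp heYX).1
    have heX := (Finset.mem_sdiff.mp heYX).2
    have hcard' : (insert e X).card + k = Y.card := by
      rw [Finset.card_insert_of_notMem heX]; omega
    obtain ⟨S, hS, hScard, hSind⟩ := ih (insert e X) Y hins hY hcard'
    have heS : e ∉ S := fun h => by
      have := Finset.mem_sdiff.mp (hS h)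
      exact this.2 (Finset.mem_insert_self e X)
    refine ⟨insert e S, ?_, ?_, ?_⟩
    · intro x hx
      rcases Finset.mem_insert.mp hx with rfl | hx
      · exact heYX
      · have := Finset.mem_sdiff.mp (hS hx)
        exact Finset.mem_sdiff.mpr ⟨this.1, fun hxX => this.2 (Finset.mem_insert_of_mem hxX)⟩
    · rw [Finset.card_insert_of_notMem heS, hScard]
    · have : X ∪ insert e S = insert e X ∪ S := by
        ext x; simp [Finset.mem_insert, Finset.mem_union]
      rw [this]; exact hSind

/-- Downsizing lemma: if `(I \ A) ∪ B` is independent, then any subset of `A` (resp. `B`)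
can be matched with a subset of `B` (resp. `A`) of equal cardinality preserving independence. -/
theorem downsizing {E : Type*} [DecidableEq E] [Fintype E] (M : FinMatroid E)
    (I : Finset E) (hI : M.Indep I)
    (A B : Finset E) (hA : A ⊆ I) (hB : B ⊆ Finset.univ \ I)
    (hcard : A.card = B.card) (hex : M.Indep ((I \ A) ∪ B)) :
    (∀ A' ⊆ A, ∃ B' ⊆ B, A'.card = B'.card ∧ M.Indep ((I \ A') ∪ B')) ∧
    (∀ B' ⊆ B, ∃ A' ⊆ A, A'.card = B'.card ∧ M.Indep ((I \ A') ∪ B')) := by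
  have hBI : Disjoint B I := by
    rw [Finset.disjoint_left]
    intro x hxB hxI
    exact (Finset.mem_sdiff.mp (hB hxB)).2 hxI
  have hJcard : ((I \ A) ∪ B).card = I.card := by
    rw [Finset.card_union_of_disjoint, Finset.card_sdiff_of_subset hA]
    · have : A.card ≤ I.card := Finset.card_le_card hA
      omega
    · exact Finset.disjoint_of_subset_left (Finset.sdiff_subset) hBI.symm
  constructor
  · intro A' hA'
    have hA'I : A' ⊆ I := hA'.trans hA
    have hX : M.Indep (I \ A') := M.subset_indep (Finset.sdiff_subset) hI
    have hc : (I \ A').card + A'.card = ((I \ A) ∪ B).card := by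
      rw [Finset.card_sdiff_of_subset hA'I, hJcard]
      have : A'.card ≤ I.card := Finset.card_le_card hA'I
      omega
    obtain ⟨S, hS, hScard, hSind⟩ := M.augment A'.card (I \ A') ((I \ A) ∪ B) hX hex hc
    refine ⟨S, ?_, hScard.symm, hSind⟩
    intro x hx
    have hm := Finset.mem_sdiff.mp (hS hx)
    rcases Finset.mem_union.mp hm.1 with h | h
    · exfalso
      have := Finset.mem_sdiff.mp h
      exact hm.2 (Finset.mem_sdiff.mpr ⟨this.1, fun hxA' => this.2 (hA' hxA')⟩)
    · exact h
  · intro B' hB'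
    have hX : M.Indep ((I \ A) ∪ B') :=
      M.subset_indep (Finset.union_subset_union_right hB') hex
    have hB'I : Disjoint B' I := Finset.disjoint_of_subset_left hB' hBI
    have hXcard : ((I \ A) ∪ B').card = I.card - A.card + B'.card := by
      rw [Finset.card_union_of_disjoint, Finset.card_sdiff_of_subset hA]
      exact Finset.disjoint_of_subset_left (Finset.sdiff_subset) hB'I.symm
    have hB'B : B'.card ≤ B.card := Finset.card_le_card hB'
    have hAI : A.card ≤ I.card := Finset.card_le_card hA
    have hc : ((I \ A) ∪ B').card + (A.card - B'.card) = I.card := by omega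
    obtain ⟨S, hS, hScard, hSind⟩ := M.augment (A.card - B'.card) _ I hX hI hc
    have hSA : S ⊆ A := by
      intro x hx
      have hm := Finset.mem_sdiff.mp (hS hx)
      by_contra hxA
      exact hm.2 (Finset.mem_union_left _ (Finset.mem_sdiff.mpr ⟨hm.1, hxA⟩))
    refine ⟨A \ S, Finset.sdiff_subset, ?_, ?_⟩
    · rw [Finset.card_sdiff_of_subset hSA, hScard]; omega
    · have heq : (I \ (A \ S)) ∪ B' = ((I \ A) ∪ B') ∪ S := by
        ext x
        simp only [Finset.mem_union, Finset.mem_sdiff]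
        constructor
        · rintro (⟨hxI, hx⟩ | hxB')
          · by_cases hxA : x ∈ A
            · have hxS : x ∈ S := by tauto
              tauto
            · tauto
          · tauto
        · rintro ((⟨hxI, hxA⟩ | hxB') | hxS)
          · tauto
          · tauto
          · have := Finset.mem_sdiff.mp (hS hxS)
            have hxI := (Finset.mem_sdiff.mp (hS hxS)).1
            exact Or.inl ⟨hxI, fun h => h.2 hxS⟩
      rw [heq]; exact hSind
end

section
/- Let M = (E, 𝓘) be a matroid on a finite ground set E, let P_B(M) ⊆ ℝ^E be its base polytope, let F be a face of P_B(M) (a nonempty extreme subset of P_B(M)), and let x* ∈ F. If the affine dimension of F is d (i.e., the vector span of differences of points of F has dimension d over ℝ), then there exists a basis B of M with χ(B) ∈ F and ‖χ(B) − x*‖₁ ≤ d. -/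
/-- A basis is an inclusionwise maximal independent set. -/
def FinMatroid.IsBase {E : Type*} [DecidableEq E] (M : FinMatroid E) (B : Finset E) : Prop :=
  M.Indep B ∧ ∀ ⦃X : Finset E⦄, M.Indep X → B ⊆ X → X = B

/-- The characteristic vector of a subset of the ground set. -/
def chi {E : Type*} [DecidableEq E] (S : Finset E) : E → ℝ := fun e => if e ∈ S then 1 else 0

/-- The base polytope: the convex hull of characteristic vectors of bases. -/
def basePolytope {E : Type*} [DecidableEq E] (M : FinMatroid E) : Set (E → ℝ) :=
  convexHull ℝ {x : E → ℝ | ∃ B : Finset E, M.IsBase B ∧ x = chi B}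

/-!
Write `x` as a convex combination of vertices `χ(B)` of the base polytope; since `F` is a face,
all of them lie in `F`. Maximising the linear functional `y ↦ ∑ₑ yₑ (2xₑ - 1)` over these
vertices yields a basis `B` with `‖χ(B) - x‖₁ ≤ 2 ∑ₑ xₑ (1 - xₑ)`. A coordinate `i` contributes
to this sum only if `eᵢ - eⱼ ∈ vectorSpan F` for some `j ≠ i`: otherwise symmetric basis exchange
inside the face shows that all vertices of `F` agree at `i`, so `xᵢ ∈ {0, 1}`. Picking a
representative `r(i)` in each class of the equivalence relation `eᵢ - eⱼ ∈ vectorSpan F`, the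
vectors `eᵢ - e_{r(i)}` with `i ≠ r(i)` are linearly independent, so at most `2d` coordinates
contribute, each at most `1/4`.
-/

open Finset

namespace Matroid

variable {α : Type*} {M : Matroid α} {B₁ B₂ : Set α} {e : α}

theorem IsBase.exists_symm_exchange (hB₁ : M.IsBase B₁) (hB₂ : M.IsBase B₂) (he : e ∈ B₁ \ B₂) :
    ∃ f ∈ B₂ \ B₁, M.IsBase (insert f (B₁ \ {e})) ∧ M.IsBase (insert e (B₂ \ {f})) := by
  have heE : e ∈ M.E := hB₁.subset_ground he.1
  have hC := hB₂.fundCircuit_isCircuit heE he.2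
  have hK := fundCocircuit_isCocircuit he.1 hB₁
  obtain ⟨f, hfCK, hfe⟩ : ∃ f ∈ M.fundCircuit e B₂ ∩ M.fundCocircuit e B₁, f ≠ e := by
    by_contra! h
    exact hC.inter_isCocircuit_ne_singleton hK (Set.eq_singleton_iff_unique_mem.2
      ⟨⟨mem_fundCircuit .., mem_fundCocircuit ..⟩, h⟩)
  have hfB₂ : f ∈ B₂ :=
    (Set.mem_insert_iff.1 (fundCircuit_subset_insert _ _ _ hfCK.1)).resolve_left hfe
  have hfB₁ : f ∉ B₁ :=
    ((Set.mem_insert_iff.1 (fundCocircuit_subset_insert_compl _ _ _ hfCK.2)).resolve_left hfe).2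
  refine ⟨f, ⟨hfB₂, hfB₁⟩, hB₁.exchange_isBase_of_indep hfB₁ ?_,
    hB₂.exchange_isBase_of_indep he.2 ?_⟩
  · have := hB₁.mem_fundCocircuit_iff_mem_fundCircuit.1 hfCK.2
    rw [hB₁.indep.mem_fundCircuit_iff (by rw [hB₁.closure_eq]; exact hB₂.subset_ground hfB₂)
      hfB₁] at this
    rwa [Set.insert_sdiff_singleton_comm hfe]
  · have := hfCK.1
    rw [hB₂.indep.mem_fundCircuit_iff (by rwa [hB₂.closure_eq]) he.2] at this
    rwa [Set.insert_sdiff_singleton_comm hfe.symm]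

end Matroid

namespace FinMatroid

variable {E : Type*} [DecidableEq E]

def toMatroid (M : FinMatroid E) : Matroid E :=
  IndepMatroid.matroid <| IndepMatroid.ofFinset Set.univ M.Indep M.empty_indep
    (fun _ _ hJ hIJ => M.subset_indep hIJ hJ)
    (fun _ _ hI hJ h => by
      simpa only [mem_sdiff, exists_prop, and_assoc] using M.exchange hI hJ h)
    (fun _ _ => Set.subset_univ _)

variable {M : FinMatroid E}

lemma toMatroid_indep_coe {I : Finset E} : M.toMatroid.Indep I ↔ M.Indep I := by
  simp [toMatroid]

lemma isBase_toMatroid_coe [Finite E] {B : Finset E} : M.toMatroid.IsBase B ↔ M.IsBase B := by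
  rw [Matroid.isBase_iff_maximal_indep, maximal_iff, toMatroid_indep_coe, FinMatroid.IsBase]
  refine and_congr_right fun _ => ⟨fun h X hX hBX => ?_, fun h Y hY hBY => ?_⟩
  · exact_mod_cast (h (toMatroid_indep_coe.2 hX) (coe_subset.2 hBX)).symm
  · lift Y to Finset E using Y.toFinite
    exact_mod_cast (h (toMatroid_indep_coe.1 hY) (coe_subset.1 hBY)).symm

theorem IsBase.exists_symm_exchange [Finite E] {B₁ B₂ : Finset E} {e : E} (hB₁ : M.IsBase B₁)
    (hB₂ : M.IsBase B₂) (he₁ : e ∈ B₁) (he₂ : e ∉ B₂) :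
    ∃ f ∈ B₂, f ∉ B₁ ∧ M.IsBase (insert f (B₁.erase e)) ∧ M.IsBase (insert e (B₂.erase f)) := by
  rw [← isBase_toMatroid_coe] at hB₁ hB₂
  obtain ⟨f, ⟨hf₂, hf₁⟩, h₁, h₂⟩ := hB₁.exists_symm_exchange hB₂ ⟨he₁, he₂⟩
  refine ⟨f, hf₂, hf₁, ?_, ?_⟩ <;> rw [← isBase_toMatroid_coe] <;> push_cast <;> assumption

end FinMatroid

namespace Submodule

variable {K ι : Type*} [Field K] [DecidableEq ι] (V : Submodule K (ι → K))

def singleSubSingleSetoid : Setoid ι where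
  r i j := Pi.single i 1 - Pi.single j 1 ∈ V
  iseqv :=
    { refl i := by simp
      symm h := by rw [← neg_sub]; exact V.neg_mem h
      trans h₁ h₂ := by simpa using V.add_mem h₁ h₂ }

open Classical in
theorem card_filter_exists_single_sub_single_mem_le [Fintype ι] :
    #{i | ∃ j ≠ i, Pi.single i 1 - Pi.single j 1 ∈ V} ≤ 2 * Module.finrank K V := by
  let s := V.singleSubSingleSetoid
  let rep (i : ι) : ι := (_root_.Quotient.mk s i).out
  have rep_rel (i : ι) : s.r (rep i) i := _root_.Quotient.mk_out (s := s) i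
  have rep_eq {i j : ι} (h : s.r i j) : rep i = rep j :=
    congrArg _root_.Quotient.out (_root_.Quotient.sound h)
  let N : Finset ι := {i | rep i ≠ i}
  have hN : #N ≤ Module.finrank K V := by
    let v (i : N) : ι → K := Pi.single (i : ι) 1 - Pi.single (rep i) 1
    have hv : LinearIndependent K v := by
      refine LinearIndependent.of_comp (LinearMap.funLeft K K ((↑) : N → ι)) ?_
      convert Pi.linearIndependent_single_one N K with i
      ext j
      have hj : (j : ι) ≠ rep i := fun h => (mem_filter.1 j.2).2 (h ▸ rep_eq (rep_rel i))
      simp only [Function.comp_apply, LinearMap.funLeft_apply, v, Pi.sub_apply, Pi.single_apply,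
        if_neg hj, Subtype.val_inj, sub_zero]
    calc #N = Module.finrank K (span K (Set.range v)) := by
          rw [finrank_span_eq_card hv, Fintype.card_coe]
      _ ≤ Module.finrank K V := Submodule.finrank_mono <| span_le.2 <| by
          rintro _ ⟨i, rfl⟩
          exact s.symm (rep_rel i)
  calc #{i | ∃ j ≠ i, Pi.single i 1 - Pi.single j 1 ∈ V}
      ≤ #(N ∪ N.image rep) := by
        refine card_le_card fun i hi => ?_
        obtain ⟨j, hji, hij⟩ := (mem_filter.1 hi).2
        by_cases hrep : rep i = i
        · have hj : rep j = i := (rep_eq hij).symm.trans hrep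
          exact mem_union_right _ (mem_image.2
            ⟨j, mem_filter.2 ⟨mem_univ j, hj.trans_ne hji.symm⟩, hj⟩)
        · exact mem_union_left _ (by simpa [N] using hrep)
    _ ≤ #N + #N := (card_union_le _ _).trans (Nat.add_le_add_left card_image_le _)
    _ ≤ 2 * Module.finrank K V := by omega

end Submodule

theorem IsExtreme.mem_convexHull_inter {𝕜 V : Type*} [Semiring 𝕜] [PartialOrder 𝕜]
    [IsOrderedRing 𝕜] [AddCommMonoid V] [Module 𝕜 V] {S F : Set V}
    (hF : IsExtreme 𝕜 (convexHull 𝕜 S) F) {x : V} (hx : x ∈ F) :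
    x ∈ convexHull 𝕜 (S ∩ F) := by
  suffices h : convexHull 𝕜 S ⊆ {y ∈ convexHull 𝕜 S | y ∈ F → y ∈ convexHull 𝕜 (S ∩ F)} from
    (h (hF.subset hx)).2 hx
  refine convexHull_min (fun y hy => ⟨subset_convexHull 𝕜 S hy,
    fun hyF => subset_convexHull 𝕜 _ ⟨hy, hyF⟩⟩) ?_
  intro y hy z hz a b ha hb hab
  refine ⟨convex_convexHull 𝕜 S hy.1 hz.1 ha hb hab, fun hw => ?_⟩
  obtain rfl | ha := ha.eq_or_lt
  · obtain rfl : b = 1 := by simpa using hab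
    simp_all
  obtain rfl | hb := hb.eq_or_lt
  · obtain rfl : a = 1 := by simpa using hab
    simp_all
  have hseg : a • y + b • z ∈ openSegment 𝕜 y z := ⟨a, b, ha, hb, hab, rfl⟩
  exact convex_convexHull 𝕜 _ (hy.2 (hF.left_mem_of_mem_openSegment hy.1 hz.1 hw hseg))
    (hz.2 (hF.right_mem_of_mem_openSegment hy.1 hz.1 hw hseg)) ha.le hb.le hab

section Chi

variable {E : Type*} [DecidableEq E]

lemma chi_mem_Icc (S : Finset E) : chi S ∈ Set.Icc 0 1 :=
  ⟨fun e => by unfold chi; split_ifs <;> norm_num, fun e => by unfold chi; split_ifs <;> norm_num⟩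

lemma chi_sub_chi_insert_erase {B : Finset E} {e f : E} (he : e ∈ B) (hf : f ∉ B) :
    chi B - chi (insert f (B.erase e)) = Pi.single e 1 - Pi.single f 1 := by
  have hef : e ≠ f := ne_of_mem_of_not_mem he hf
  ext g
  by_cases hge : g = e <;> by_cases hgf : g = f <;> simp_all [chi]

lemma chi_add_chi_eq_of_exchange {B B' : Finset E} {e f : E} (he : e ∈ B) (he' : e ∉ B')
    (hf : f ∈ B') (hf' : f ∉ B) :
    chi B + chi B' = chi (insert f (B.erase e)) + chi (insert e (B'.erase f)) := by
  have hef : e ≠ f := ne_of_mem_of_not_mem he hf'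
  ext g
  by_cases hge : g = e <;> by_cases hgf : g = f <;> simp_all [chi]

theorem exists_sum_abs_chi_sub_le [Fintype E] {𝓑 : Set (Finset E)} {x : E → ℝ}
    (hx : x ∈ convexHull ℝ (chi '' 𝓑)) :
    ∃ B ∈ 𝓑, ∑ e, |chi B e - x e| ≤ 2 * ∑ e, x e * (1 - x e) := by
  have hx01 : x ∈ Set.Icc 0 1 :=
    convexHull_min (by rintro _ ⟨B, -, rfl⟩; exact chi_mem_Icc B) (convex_Icc 0 1) hx
  let L := Fintype.linearCombination ℝ fun e => 2 * x e - 1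
  obtain ⟨_, ⟨B, hB, rfl⟩, hLB⟩ :=
    (L.convexOn convex_univ).exists_ge_of_mem_convexHull (Set.subset_univ _) hx
  refine ⟨B, hB, ?_⟩
  have habs : ∀ e, |chi B e - x e| = x e - chi B e * (2 * x e - 1) := fun e => by
    have h0 : 0 ≤ x e := hx01.1 e
    have h1 : x e ≤ 1 := hx01.2 e
    unfold chi; split_ifs
    · rw [abs_of_nonneg (by linarith)]; ring
    · rw [abs_of_nonpos (by linarith)]; ring
  simp only [L, Fintype.linearCombination_apply, smul_eq_mul] at hLB
  simp only [habs, sum_sub_distrib, mul_sum]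
  linarith [show ∑ e, 2 * (x e * (1 - x e)) = ∑ e, x e - ∑ e, x e * (2 * x e - 1) by
    rw [← sum_sub_distrib]; congr! 1; ring]

end Chi

section Face

variable {E : Type*} [DecidableEq E] {M : FinMatroid E} {F : Set (E → ℝ)}

lemma chi_mem_basePolytope {B : Finset E} (hB : M.IsBase B) : chi B ∈ basePolytope M :=
  subset_convexHull ℝ _ ⟨B, hB, rfl⟩

theorem mem_of_chi_mem_face [Finite E] (hFconv : Convex ℝ F)
    (hFface : IsExtreme ℝ (basePolytope M) F)
    {i : E} (hi : ∀ j ≠ i, Pi.single i 1 - Pi.single j 1 ∉ vectorSpan ℝ F)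
    {B B' : Finset E} (hB : M.IsBase B) (hB' : M.IsBase B') (hBF : chi B ∈ F)
    (hB'F : chi B' ∈ F) (hiB : i ∈ B) : i ∈ B' := by
  by_contra hiB'
  obtain ⟨f, hfB', hfB, h₁, h₂⟩ := hB.exists_symm_exchange hB' hiB hiB'
  have hmid : (1 / 2 : ℝ) • chi (insert f (B.erase i)) + (1 / 2 : ℝ) • chi (insert i (B'.erase f))
      ∈ F := by
    rw [← smul_add, ← chi_add_chi_eq_of_exchange hiB hiB' hfB' hfB, smul_add]
    exact hFconv hBF hB'F (by norm_num) (by norm_num) (by norm_num)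
  have h₁F := hFface.left_mem_of_mem_openSegment (chi_mem_basePolytope h₁)
    (chi_mem_basePolytope h₂) hmid ⟨1 / 2, 1 / 2, by norm_num, by norm_num, by norm_num, rfl⟩
  refine hi f (ne_of_mem_of_not_mem hfB' hiB') ?_
  rw [← chi_sub_chi_insert_erase hiB hfB, ← vsub_eq_sub]
  exact vsub_mem_vectorSpan ℝ hBF h₁F

theorem apply_eq_chi_of_mem_convexHull [Finite E] (hFconv : Convex ℝ F)
    (hFface : IsExtreme ℝ (basePolytope M) F)
    {i : E} (hi : ∀ j ≠ i, Pi.single i 1 - Pi.single j 1 ∉ vectorSpan ℝ F)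
    {B : Finset E} (hB : M.IsBase B) (hBF : chi B ∈ F) {x : E → ℝ}
    (hx : x ∈ convexHull ℝ (chi '' {B | M.IsBase B ∧ chi B ∈ F})) : x i = chi B i := by
  have hconv : Convex ℝ {y : E → ℝ | y i = chi B i} :=
    convex_hyperplane (LinearMap.proj i : (E → ℝ) →ₗ[ℝ] ℝ).isLinear _
  refine convexHull_min ?_ hconv hx
  rintro _ ⟨B', ⟨hB', hB'F⟩, rfl⟩
  have hiff : i ∈ B' ↔ i ∈ B :=
    ⟨mem_of_chi_mem_face hFconv hFface hi hB' hB hB'F hBF,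
      mem_of_chi_mem_face hFconv hFface hi hB hB' hBF hB'F⟩
  simp [chi, hiff]

end Face

theorem basis_close_to_point_on_face_general {E : Type*} [DecidableEq E] [Fintype E]
    (M : FinMatroid E) (F : Set (E → ℝ))
    (hFconv : Convex ℝ F)
    (hFface : IsExtreme ℝ (basePolytope M) F)
    (x : E → ℝ) (hx : x ∈ F)
    (d : ℕ) (hd : Module.finrank ℝ (vectorSpan ℝ F) = d) :
    ∃ B : Finset E, M.IsBase B ∧ chi B ∈ F ∧ ∑ e, |chi B e - x e| ≤ (d : ℝ) := by
  classical
  have hxS : x ∈ convexHull ℝ (chi '' {B | M.IsBase B ∧ chi B ∈ F}) := by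
    convert hFface.mem_convexHull_inter hx using 2
    ext; aesop
  obtain ⟨B, ⟨hB, hBF⟩, hdist⟩ := exists_sum_abs_chi_sub_le hxS
  set A : Finset E := {i | ∃ j ≠ i, Pi.single i 1 - Pi.single j 1 ∈ vectorSpan ℝ F}
  have hrigid : ∀ i ∉ A, x i * (1 - x i) = 0 := fun i hi => by
    rw [apply_eq_chi_of_mem_convexHull hFconv hFface (by simpa [A] using hi) hB hBF hxS]
    unfold chi; split_ifs <;> norm_num
  have hA : (#A : ℝ) ≤ 2 * d := by
    exact_mod_cast hd ▸ (vectorSpan ℝ F).card_filter_exists_single_sub_single_mem_le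
  refine ⟨B, hB, hBF, hdist.trans ?_⟩
  calc 2 * ∑ e, x e * (1 - x e) = 2 * ∑ e ∈ A, x e * (1 - x e) := by
        rw [sum_subset (subset_univ A) fun i _ hi => hrigid i hi]
    _ ≤ 2 * ∑ _e ∈ A, (1 / 4 : ℝ) := by
        gcongr with e; nlinarith [sq_nonneg (x e - 1 / 2)]
    _ ≤ d := by
        rw [sum_const, nsmul_eq_mul]; linarith

/-- If `x*` lies on a face `F` of the base polytope of affine dimension `d`,
then there is a basis `B` with `χ(B) ∈ F` and `‖χ(B) − x*‖₁ ≤ d`. -/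
theorem basis_close_to_point_on_face {E : Type*} [DecidableEq E] [Fintype E]
    (M : FinMatroid E) (F : Set (E → ℝ))
    (hFne : F.Nonempty) (hFconv : Convex ℝ F)
    (hFface : IsExtreme ℝ (basePolytope M) F)
    (x : E → ℝ) (hx : x ∈ F)
    (d : ℕ) (hd : Module.finrank ℝ (vectorSpan ℝ F) = d) :
    ∃ B : Finset E, M.IsBase B ∧ chi B ∈ F ∧ ∑ e, |chi B e - x e| ≤ (d : ℝ) :=
  basis_close_to_point_on_face_general M F hFconv hFface x hx d hd
end

section
/- Let S be a finite set, let Δ ≥ 0 and μ ≥ 0 be integers, and let w : S → ℤ satisfy −Δ ≤ w(s) ≤ Δ for all s ∈ S and |Σ_{s∈S} w(s)| = μ. Let S⁺ = {s ∈ S : w(s) ≥ 0}, and let S₁, …, S_ℓ be a partition of S into ℓ ≥ 1 parts. Then there exists an index i ∈ {1,…,ℓ} with |S⁺ ∩ S_i| ≥ (|S| − μ) / (ℓ·(Δ+1)). -/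
open Finset

/-- Averaging proposition: if `|w(S)| = μ` and `S₁,…,S_ℓ` partition `S`, then some part
contains at least `(|S| − μ)/(ℓ(Δ+1))` elements of nonnegative weight. -/
theorem part_with_many_nonnegative {S : Type*} [Fintype S] [DecidableEq S]
    (Δ μ : ℕ) (w : S → ℤ) (hw : ∀ s, |w s| ≤ (Δ : ℤ))
    (hμ : |∑ s, w s| = (μ : ℤ))
    (ℓ : ℕ) (hℓ : 1 ≤ ℓ) (P : Fin ℓ → Finset S)
    (hdisj : ∀ i j, i ≠ j → Disjoint (P i) (P j))
    (hcover : ∀ s, ∃ i, s ∈ P i) :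
    ∃ i : Fin ℓ,
      ((Fintype.card S : ℝ) - (μ : ℝ)) / ((ℓ : ℝ) * ((Δ : ℝ) + 1)) ≤
        (((Finset.univ.filter fun s => 0 ≤ w s) ∩ P i).card : ℝ) := by
  classical
  set T := Finset.univ.filter (fun s => 0 ≤ w s) with hT
  set Tc := Finset.univ.filter (fun s => ¬ 0 ≤ w s) with hTc
  have hcardS : T.card + Tc.card = Fintype.card S := by
    rw [hT, hTc, Finset.card_filter_add_card_filter_not]
    exact (Finset.card_univ)
  have h1 : ∑ s ∈ T, w s ≤ (Δ : ℤ) * T.card := by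
    calc ∑ s ∈ T, w s ≤ ∑ _s ∈ T, (Δ : ℤ) :=
          Finset.sum_le_sum (fun s _ => (abs_le.mp (hw s)).2)
      _ = (Δ : ℤ) * T.card := by rw [Finset.sum_const, nsmul_eq_mul, mul_comm]
  have h2 : ∑ s ∈ Tc, w s ≤ -(Tc.card : ℤ) := by
    calc ∑ s ∈ Tc, w s ≤ ∑ _s ∈ Tc, (-1 : ℤ) := by
          refine Finset.sum_le_sum (fun s hs => ?_)
          have : ¬ 0 ≤ w s := (Finset.mem_filter.mp hs).2
          omega
      _ = -(Tc.card : ℤ) := by rw [Finset.sum_const, nsmul_eq_mul]; ring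
  have hsplit : ∑ s ∈ T, w s + ∑ s ∈ Tc, w s = ∑ s, w s :=
    Finset.sum_filter_add_sum_filter_not _ _ _
  have h3 : -(μ : ℤ) ≤ ∑ s, w s := by
    rw [← hμ]; exact neg_abs_le _
  have key : (Fintype.card S : ℤ) - μ ≤ ((Δ : ℤ) + 1) * T.card := by
    have : (T.card : ℤ) + Tc.card = Fintype.card S := by exact_mod_cast hcardS
    nlinarith [h1, h2, h3, hsplit]
  -- pigeonhole
  have hdisj' : ∀ i ∈ (Finset.univ : Finset (Fin ℓ)), ∀ j ∈ Finset.univ, i ≠ j →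
      Disjoint (T ∩ P i) (T ∩ P j) := fun i _ j _ h =>
    (hdisj i j h).mono Finset.inter_subset_right Finset.inter_subset_right
  have hunion : Finset.univ.biUnion (fun i => T ∩ P i) = T := by
    ext s
    simp only [Finset.mem_biUnion, Finset.mem_inter, Finset.mem_univ, true_and]
    constructor
    · rintro ⟨i, hs, _⟩; exact hs
    · intro hs; obtain ⟨i, hi⟩ := hcover s; exact ⟨i, hs, hi⟩
  have hsum : ∑ i, (T ∩ P i).card = T.card := by
    rw [← Finset.card_biUnion hdisj', hunion]
  have hℓpos : (0 : ℝ) < ℓ := by exact_mod_cast hℓ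
  have hnonempty : (Finset.univ : Finset (Fin ℓ)).Nonempty := ⟨⟨0, hℓ⟩, Finset.mem_univ _⟩
  have havg : ∑ _i : Fin ℓ, ((T.card : ℝ) / ℓ) ≤ ∑ i : Fin ℓ, ((T ∩ P i).card : ℝ) := by
    rw [Finset.sum_const, nsmul_eq_mul]
    have : ∑ i : Fin ℓ, ((T ∩ P i).card : ℝ) = (T.card : ℝ) := by
      rw [← Nat.cast_sum, hsum]
    rw [this, Finset.card_univ, Fintype.card_fin]
    rw [mul_div_assoc', mul_comm, mul_div_assoc, div_self (ne_of_gt hℓpos), mul_one]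
  obtain ⟨i, -, hi⟩ := Finset.exists_le_of_sum_le hnonempty havg
  refine ⟨i, ?_⟩
  have hi' : (T.card : ℝ) ≤ ℓ * ((T ∩ P i).card : ℝ) := by
    rw [div_le_iff₀ hℓpos] at hi; linarith [hi]
  have keyR : (Fintype.card S : ℝ) - μ ≤ ((Δ : ℝ) + 1) * T.card := by exact_mod_cast key
  have hΔ : (0 : ℝ) ≤ Δ := Nat.cast_nonneg _
  rw [div_le_iff₀ (by positivity)]
  nlinarith [hi', keyR, (Nat.cast_nonneg (T ∩ P i).card : (0:ℝ) ≤ _)]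
end

section
/- Let M = (E, 𝓘) be a matroid, let Δ ≥ 1 and μ ≥ 0 be integers, let w : E → ℤ satisfy −Δ ≤ w(e) ≤ Δ for all e ∈ E, and let A, B ∈ 𝓘 be disjoint independent sets with |A| = |B| = k and |w(A) − w(B)| ≤ μ. Then there exist subsets A' ⊆ A and B' ⊆ B of equal cardinality such that: (i) (A \ A') ∪ B' ∈ 𝓘; (ii) |A'| = |B'| ≥ (k − μ)/(2Δ+1)²; and (iii) w(a) ≥ w(b) for every a ∈ A' and b ∈ B'. -/
open Finset

/-- Extension lemma: an independent set `X` can be extended inside `X ∪ Y` to an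
independent set of size `Y.card`, whenever `X.card ≤ Y.card` and `Y` is independent. -/
lemma FinMatroid.extend_aux {E : Type*} [DecidableEq E] (M : FinMatroid E)
    (Y : Finset E) (hY : M.Indep Y) :
    ∀ n (X : Finset E), M.Indep X → X.card + n = Y.card →
      ∃ Z : Finset E, X ⊆ Z ∧ Z ⊆ X ∪ Y ∧ Z.card = Y.card ∧ M.Indep Z := by
  intro n
  induction n with
  | zero =>
    intro X hX h
    exact ⟨X, subset_rfl, subset_union_left, by omega, hX⟩
  | succ n ih =>
    intro X hX h
    obtain ⟨e, he, hei⟩ := M.exchange hX hY (by omega)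
    rw [mem_sdiff] at he
    obtain ⟨heY, heX⟩ := he
    obtain ⟨Z, h1, h2, h3, h4⟩ := ih (insert e X) hei (by
      rw [card_insert_of_notMem heX]; omega)
    refine ⟨Z, (subset_insert e X).trans h1, ?_, h3, h4⟩
    intro x hx
    rcases mem_union.mp (h2 hx) with hx' | hx'
    · rcases mem_insert.mp hx' with rfl | hxX
      · exact mem_union_right _ heY
      · exact mem_union_left _ hxX
    · exact mem_union_right _ hx'

/-- For disjoint equicardinal independent sets `A, B` with `|w(A) − w(B)| ≤ μ` there are
subsets `A' ⊆ A`, `B' ⊆ B` of equal cardinality at least `(k − μ)/(2Δ+1)²` such that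
`(A \ A') ∪ B'` is independent and every element of `A'` weighs at least every element of `B'`. -/
theorem monotone_exchange {E : Type*} [DecidableEq E] [Fintype E]
    (M : FinMatroid E) (Δ μ : ℕ) (hΔ : 1 ≤ Δ)
    (w : E → ℤ) (hw : ∀ e, |w e| ≤ (Δ : ℤ))
    (A B : Finset E) (hA : M.Indep A) (hB : M.Indep B) (hAB : Disjoint A B)
    (k : ℕ) (hAk : A.card = k) (hBk : B.card = k)
    (hμ : |(∑ e ∈ A, w e) - (∑ e ∈ B, w e)| ≤ (μ : ℤ)) :
    ∃ A' ⊆ A, ∃ B' ⊆ B,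
      M.Indep ((A \ A') ∪ B') ∧
      A'.card = B'.card ∧
      ((k : ℝ) - (μ : ℝ)) / (2 * (Δ : ℝ) + 1) ^ 2 ≤ (A'.card : ℝ) ∧
      (∀ a ∈ A', ∀ b ∈ B', w b ≤ w a) := by
  by_cases hkμ : k ≤ μ
  · refine ⟨∅, empty_subset _, ∅, empty_subset _, ?_, rfl, ?_, by simp⟩
    · simpa using hA
    · rw [card_empty]
      push_cast
      apply div_nonpos_of_nonpos_of_nonneg
      · have : (k : ℝ) ≤ μ := by exact_mod_cast hkμ
        linarith
      · positivity
  · push_neg at hkμ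
    -- The key counting identity: summing (|B_{≤t}| - |A_{<t}|) over thresholds t
    have hsum : ∑ t ∈ Finset.Icc (-(Δ : ℤ)) Δ,
        (((B.filter fun e => w e ≤ t).card : ℤ) - ((A.filter fun e => w e < t).card : ℤ))
        = (k : ℤ) + ((∑ e ∈ A, w e) - (∑ e ∈ B, w e)) := by
      rw [Finset.sum_sub_distrib]
      have hBsum : ∑ t ∈ Finset.Icc (-(Δ : ℤ)) Δ, ((B.filter fun e => w e ≤ t).card : ℤ)
          = (k : ℤ) * ((Δ : ℤ) + 1) - ∑ e ∈ B, w e := by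
        have h1 : ∀ t ∈ Finset.Icc (-(Δ : ℤ)) Δ, ((B.filter fun e => w e ≤ t).card : ℤ)
            = ∑ e ∈ B, if w e ≤ t then (1 : ℤ) else 0 := by
          intro t _; rw [Finset.card_filter]; push_cast; rfl
        rw [Finset.sum_congr rfl h1, Finset.sum_comm]
        have h2 : ∀ e ∈ B, (∑ t ∈ Finset.Icc (-(Δ : ℤ)) Δ, if w e ≤ t then (1 : ℤ) else 0)
            = (Δ : ℤ) + 1 - w e := by
          intro e _
          have hwe := abs_le.mp (hw e)
          have hfil : (Finset.Icc (-(Δ : ℤ)) Δ).filter (fun t => w e ≤ t)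
              = Finset.Icc (w e) (Δ : ℤ) := by
            ext x; simp only [Finset.mem_filter, Finset.mem_Icc]; omega
          calc (∑ t ∈ Finset.Icc (-(Δ : ℤ)) Δ, if w e ≤ t then (1 : ℤ) else 0)
              = (((Finset.Icc (-(Δ : ℤ)) Δ).filter (fun t => w e ≤ t)).card : ℤ) := by
                rw [Finset.card_filter]; push_cast; rfl
            _ = ((Finset.Icc (w e) (Δ : ℤ)).card : ℤ) := by rw [hfil]
            _ = (Δ : ℤ) + 1 - w e := by rw [Int.card_Icc]; omega
        rw [Finset.sum_congr rfl h2, Finset.sum_sub_distrib, Finset.sum_const, hBk,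
          nsmul_eq_mul]
      have hAsum : ∑ t ∈ Finset.Icc (-(Δ : ℤ)) Δ, ((A.filter fun e => w e < t).card : ℤ)
          = (k : ℤ) * (Δ : ℤ) - ∑ e ∈ A, w e := by
        have h1 : ∀ t ∈ Finset.Icc (-(Δ : ℤ)) Δ, ((A.filter fun e => w e < t).card : ℤ)
            = ∑ e ∈ A, if w e < t then (1 : ℤ) else 0 := by
          intro t _; rw [Finset.card_filter]; push_cast; rfl
        rw [Finset.sum_congr rfl h1, Finset.sum_comm]
        have h2 : ∀ e ∈ A, (∑ t ∈ Finset.Icc (-(Δ : ℤ)) Δ, if w e < t then (1 : ℤ) else 0)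
            = (Δ : ℤ) - w e := by
          intro e _
          have hwe := abs_le.mp (hw e)
          have hfil : (Finset.Icc (-(Δ : ℤ)) Δ).filter (fun t => w e < t)
              = Finset.Icc (w e + 1) (Δ : ℤ) := by
            ext x; simp only [Finset.mem_filter, Finset.mem_Icc]; omega
          calc (∑ t ∈ Finset.Icc (-(Δ : ℤ)) Δ, if w e < t then (1 : ℤ) else 0)
              = (((Finset.Icc (-(Δ : ℤ)) Δ).filter (fun t => w e < t)).card : ℤ) := by
                rw [Finset.card_filter]; push_cast; rfl
            _ = ((Finset.Icc (w e + 1) (Δ : ℤ)).card : ℤ) := by rw [hfil]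
            _ = (Δ : ℤ) - w e := by rw [Int.card_Icc]; omega
        rw [Finset.sum_congr rfl h2, Finset.sum_sub_distrib, Finset.sum_const, hAk,
          nsmul_eq_mul]
      rw [hBsum, hAsum]; ring
    -- Pigeonhole: there is a threshold t with a large gap
    have hne : (Finset.Icc (-(Δ : ℤ)) Δ).Nonempty := ⟨0, by simp only [Finset.mem_Icc]; omega⟩
    have hcardIcc : (Finset.Icc (-(Δ : ℤ)) Δ).card = 2 * Δ + 1 := by
      rw [Int.card_Icc]; omega
    obtain ⟨t, hts, ht⟩ := Finset.exists_le_of_sum_le (f := fun _ : ℤ => (k : ℤ) - μ)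
      (g := fun t : ℤ => (2 * (Δ : ℤ) + 1) *
        (((B.filter fun e => w e ≤ t).card : ℤ) - ((A.filter fun e => w e < t).card : ℤ)))
      hne (by
        rw [← Finset.mul_sum, hsum, Finset.sum_const, hcardIcc, nsmul_eq_mul]
        have h1 : -(μ : ℤ) ≤ (∑ e ∈ A, w e) - (∑ e ∈ B, w e) := (abs_le.mp hμ).1
        have h2 : (0 : ℤ) ≤ 2 * (Δ : ℤ) + 1 := by positivity
        have h3 : ((2 * Δ + 1 : ℕ) : ℤ) = 2 * (Δ : ℤ) + 1 := by push_cast; ring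
        rw [h3]
        exact mul_le_mul_of_nonneg_left (by linarith) h2)
    set Bt := B.filter fun e => w e ≤ t with hBt_def
    set Al := A.filter fun e => w e < t with hAl_def
    have hkμ' : (1 : ℤ) ≤ (k : ℤ) - μ := by omega
    have hpos : (0 : ℤ) < (Bt.card : ℤ) - (Al.card : ℤ) := by nlinarith
    have hcardlt : Al.card < Bt.card := by omega
    have hAlI : M.Indep Al := M.subset_indep (Finset.filter_subset _ _) hA
    have hBtI : M.Indep Bt := M.subset_indep (Finset.filter_subset _ _) hB
    obtain ⟨C₁, hC₁sub, hC₁sub', hC₁card, hC₁⟩ :=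
      M.extend_aux Bt hBtI (Bt.card - Al.card) Al hAlI (by omega)
    have hBtk : Bt.card ≤ k := hBk ▸ Finset.card_le_card (Finset.filter_subset _ _)
    obtain ⟨C₂, hC₂sub, hC₂sub', hC₂card, hC₂⟩ :=
      M.extend_aux A hA (k - Bt.card) C₁ hC₁ (by omega)
    -- the chosen subsets
    have hB'Bt : C₁ \ Al ⊆ Bt := by
      intro x hx
      rw [Finset.mem_sdiff] at hx
      rcases Finset.mem_union.mp (hC₁sub' hx.1) with h | h
      · exact absurd h hx.2
      · exact h
    have hB'B : C₁ \ Al ⊆ B := hB'Bt.trans (Finset.filter_subset _ _)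
    have hAlC₂ : Al ⊆ C₂ := hC₁sub.trans hC₂sub
    have hset : (A \ (A \ C₂)) ∪ (C₁ \ Al) = C₂ := by
      ext x
      have h1 : x ∈ C₁ → x ∈ C₂ := fun h => hC₂sub h
      have h2 : x ∈ C₂ → x ∈ C₁ ∨ x ∈ A := fun h => Finset.mem_union.mp (hC₂sub' h)
      have h3 : x ∈ Al → x ∈ A := fun h => Finset.filter_subset _ _ h
      simp only [Finset.mem_union, Finset.mem_sdiff]
      tauto
    refine ⟨A \ C₂, Finset.sdiff_subset, C₁ \ Al, hB'B, ?_, ?_, ?_, ?_⟩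
    · rw [hset]; exact hC₂
    · -- equal cardinalities
      have hd : Disjoint (A \ (A \ C₂)) (C₁ \ Al) := by
        rw [Finset.sdiff_sdiff_self_left]
        exact hAB.mono Finset.inter_subset_left hB'B
      have hcu := Finset.card_union_of_disjoint hd
      rw [hset] at hcu
      have h5 : (A \ (A \ C₂)).card + (A \ C₂).card = A.card := by
        rw [Finset.sdiff_sdiff_self_left]
        exact Finset.card_inter_add_card_sdiff A C₂
      omega
    · -- size bound
      have hcB' : (C₁ \ Al).card = Bt.card - Al.card := by
        rw [Finset.card_sdiff_of_subset hC₁sub, hC₁card]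
      have hcA' : (A \ C₂).card = Bt.card - Al.card := by
        have hd : Disjoint (A \ (A \ C₂)) (C₁ \ Al) := by
          rw [Finset.sdiff_sdiff_self_left]
          exact hAB.mono Finset.inter_subset_left hB'B
        have hcu := Finset.card_union_of_disjoint hd
        rw [hset] at hcu
        have h5 : (A \ (A \ C₂)).card + (A \ C₂).card = A.card := by
          rw [Finset.sdiff_sdiff_self_left]
          exact Finset.card_inter_add_card_sdiff A C₂
        omega
      have hmZ : (k : ℤ) - μ ≤ (2 * (Δ : ℤ) + 1) * ((A \ C₂).card : ℤ) := by
        have : ((A \ C₂).card : ℤ) = (Bt.card : ℤ) - (Al.card : ℤ) := by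
          rw [hcA']; push_cast [Nat.cast_sub hcardlt.le]; ring
        rw [this]; exact ht
      rw [div_le_iff₀ (by positivity)]
      have h1 : (k : ℝ) - μ ≤ (2 * (Δ : ℝ) + 1) * ((A \ C₂).card : ℝ) := by
        exact_mod_cast hmZ
      have h2 : (1 : ℝ) ≤ 2 * (Δ : ℝ) + 1 := by
        have := Nat.cast_nonneg (α := ℝ) Δ; linarith
      have h3 : (0 : ℝ) ≤ ((A \ C₂).card : ℝ) := Nat.cast_nonneg _
      nlinarith [mul_nonneg (sub_nonneg.mpr h2)
        (mul_nonneg (by linarith : (0 : ℝ) ≤ 2 * (Δ : ℝ) + 1) h3)]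
    · -- monotonicity of weights
      intro a ha b hb
      rw [Finset.mem_sdiff] at ha
      have haAl : a ∉ Al := fun h => ha.2 (hAlC₂ h)
      have hat : ¬ w a < t := fun h => haAl (Finset.mem_filter.mpr ⟨ha.1, h⟩)
      have hbt : w b ≤ t := (Finset.mem_filter.mp (hB'Bt hb)).2
      omega
end

section
/- Let M = (E, 𝓘) be a matroid, let Δ ≥ 1 and μ ≥ 0 be integers, let w : E → ℤ satisfy −Δ ≤ w(e) ≤ Δ for all e ∈ E, and let A, B ∈ 𝓘 be disjoint independent sets with |A| = |B| = k and |w(A) − w(B)| ≤ μ. Then there exist subsets A' ⊆ A and B' ⊆ B of equal cardinality, each unicolor, such that: (i) (A \ A') ∪ B' ∈ 𝓘; (ii) |A'| = |B'| ≥ (k − μ)/(2Δ+1)⁴; and (iii) w(a) ≥ w(b) for every a ∈ A' and b ∈ B'. -/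
/-- A set is unicolor (w.r.t. `w`) if all its elements have the same weight. -/
def Unicolor {E : Type*} (w : E → ℤ) (S : Finset E) : Prop :=
  ∀ x ∈ S, ∀ y ∈ S, w x = w y

open Finset

theorem Finset.exists_le_card_mul_of_le_sum {ι R : Type*} [CommSemiring R] [LinearOrder R]
    [IsOrderedRing R] {s : Finset ι} (hs : s.Nonempty) {f : ι → R} {V : R}
    (h : V ≤ ∑ i ∈ s, f i) : ∃ i ∈ s, V ≤ #s * f i := by
  obtain ⟨i, hi, hmax⟩ := s.exists_max_image f hs
  exact ⟨i, hi, h.trans ((sum_le_card_nsmul s f (f i) hmax).trans_eq (nsmul_eq_mul _ _))⟩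

theorem Finset.exists_card_le_card_mul_card_filter {α β : Type*} [DecidableEq β] {S : Finset α}
    {T : Finset β} (hT : T.Nonempty) (f : α → β) (hST : ∀ x ∈ S, f x ∈ T) :
    ∃ d ∈ T, #S ≤ #T * #{x ∈ S | f x = d} := by
  rw [card_eq_sum_card_fiberwise hST]
  exact exists_le_card_mul_of_le_sum hT le_rfl

theorem Finset.exists_le_pow_three_mul_and_le_pow_four_mul {ι : Type*} {C : Finset ι}
    (hC : 2 ≤ #C) {f g : ι → ℤ} {φ ψ K : ℤ} (hf : ∀ c ∈ C, 0 ≤ f c)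
    (hfg : ∀ c ∈ C, f c ≤ g c) (hφ : 0 ≤ φ) (hψ : ψ ≤ ∑ c ∈ C, f c)
    (hKψ : K ≤ #C * (φ + ψ)) (hKg : K ≤ #C * ∑ c ∈ C, g c) :
    ∃ c ∈ C, K ≤ #C ^ 3 * (φ + f c) ∧ K ≤ #C ^ 4 * g c := by
  have hCne : C.Nonempty := card_pos.1 (by omega)
  have hm : (2 : ℤ) ≤ #C := by exact_mod_cast hC
  by_cases hKφ : K ≤ #C ^ 3 * φ
  · obtain ⟨c, hc, hgc⟩ := exists_le_card_mul_of_le_sum hCne (le_refl (∑ c ∈ C, g c))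
    refine ⟨c, hc, ?_, ?_⟩
    · nlinarith [hf c hc, pow_pos (by omega : (0 : ℤ) < #C) 3]
    · generalize (#C : ℤ) = m at *
      have hgc0 : 0 ≤ g c := (hf c hc).trans (hfg c hc)
      have : m * ∑ c ∈ C, g c ≤ m ^ 2 * g c := by nlinarith
      nlinarith [pow_le_pow_right₀ (by omega : (1 : ℤ) ≤ m) (by norm_num : 2 ≤ 4)]
  · obtain ⟨c, hc, hfc⟩ := exists_le_card_mul_of_le_sum hCne hψ
    have hfc0 := hf c hc
    generalize (#C : ℤ) = m at *
    have hmφ : m * φ ≤ m ^ 3 * φ :=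
      mul_le_mul_of_nonneg_right (le_self_pow₀ (by omega) (by norm_num)) hφ
    have hψf : m ^ 2 * ψ ≤ m ^ 3 * f c := by nlinarith
    refine ⟨c, hc, ?_, ?_⟩
    · rcases le_or_gt 0 ψ with hψ0 | hψ0
      · nlinarith
      · nlinarith [pow_pos (by omega : (0 : ℤ) < m) 3]
    · have h4 : m ^ 4 * f c ≤ m ^ 4 * g c :=
        mul_le_mul_of_nonneg_left (hfg c hc) (by positivity)
      have h3 : m ^ 3 * ψ ≤ m ^ 4 * f c := by nlinarith
      have h2 : m ^ 2 * K ≤ m ^ 3 * φ + m ^ 3 * ψ := by nlinarith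
      have hK : 0 < K := by nlinarith [pow_pos (by omega : (0 : ℤ) < m) 3]
      have : 4 * K ≤ m ^ 2 * K := mul_le_mul_of_nonneg_right (by nlinarith) hK.le
      linarith

theorem exists_weight_threshold {E : Type*} (w : E → ℤ) (Δ : ℕ) (hw : ∀ e, |w e| ≤ Δ)
    {A B : Finset E} {k μ : ℕ} (hAk : #A = k) (hBk : #B = k)
    (hμ : -(μ : ℤ) ≤ ∑ e ∈ A, w e - ∑ e ∈ B, w e) :
    ∃ t : ℤ, (k : ℤ) - μ ≤ (2 * Δ + 1) * (#{a ∈ A | t ≤ w a} + #{b ∈ B | w b ≤ t} - k) := by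
  set C := Icc (-(Δ : ℤ)) Δ
  have hC : (#C : ℤ) = 2 * Δ + 1 := by simp only [C, Int.card_Icc]; omega
  have hwC : ∀ e, -(Δ : ℤ) ≤ w e ∧ w e ≤ Δ := fun e => abs_le.1 (hw e)
  have hA : ∑ t ∈ C, (#{a ∈ A | t ≤ w a} : ℤ) = ∑ a ∈ A, (w a + Δ + 1) := by
    have h := sum_card_bipartiteAbove_eq_sum_card_bipartiteBelow (s := A) (t := C)
      (r := fun a t => t ≤ w a)
    unfold bipartiteBelow at h
    rw [← Nat.cast_sum, ← h, Nat.cast_sum]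
    refine sum_congr rfl fun a _ => ?_
    have := hwC a
    have : C.bipartiteAbove (fun a t => t ≤ w a) a = Icc (-(Δ : ℤ)) (w a) := by
      ext t; simp only [bipartiteAbove, C, mem_filter, mem_Icc]; omega
    rw [this, Int.card_Icc]
    omega
  have hB : ∑ t ∈ C, (#{b ∈ B | w b ≤ t} : ℤ) = ∑ b ∈ B, (Δ + 1 - w b) := by
    have h := sum_card_bipartiteAbove_eq_sum_card_bipartiteBelow (s := B) (t := C)
      (r := fun b t => w b ≤ t)
    unfold bipartiteBelow at h
    rw [← Nat.cast_sum, ← h, Nat.cast_sum]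
    refine sum_congr rfl fun b _ => ?_
    have := hwC b
    have : C.bipartiteAbove (fun b t => w b ≤ t) b = Icc (w b) Δ := by
      ext t; simp only [bipartiteAbove, C, mem_filter, mem_Icc]; omega
    rw [this, Int.card_Icc]
    omega
  have hsum : (k : ℤ) - μ ≤ ∑ t ∈ C, ((#{a ∈ A | t ≤ w a} + #{b ∈ B | w b ≤ t} - k : ℤ)) := by
    rw [sum_sub_distrib, sum_add_distrib, hA, hB, sum_const, nsmul_eq_mul, hC]
    simp only [sum_add_distrib, sum_sub_distrib, sum_const, hAk, hBk, nsmul_eq_mul]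
    linarith
  obtain ⟨t, -, ht⟩ := exists_le_card_mul_of_le_sum (⟨0, by simp [C]⟩ : C.Nonempty) hsum
  exact ⟨t, hC ▸ ht⟩

namespace FinMatroid

variable {E : Type*} [DecidableEq E] {M : FinMatroid E}

section

open scoped Classical

noncomputable def rk (M : FinMatroid E) (X : Finset E) : ℕ :=
  ({J ∈ X.powerset | M.Indep J}).sup card

theorem Indep.card_le_rk {I X : Finset E} (hI : M.Indep I) (hIX : I ⊆ X) : #I ≤ M.rk X :=
  le_sup (f := card) (by simp [hIX, hI])

theorem rk_le_card (X : Finset E) : M.rk X ≤ #X :=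
  Finset.sup_le fun _ hJ => card_le_card (mem_powerset.1 (mem_filter.1 hJ).1)

theorem rk_mono {X Y : Finset E} (h : X ⊆ Y) : M.rk X ≤ M.rk Y :=
  Finset.sup_le fun _ hJ =>
    (mem_filter.1 hJ).2.card_le_rk ((mem_powerset.1 (mem_filter.1 hJ).1).trans h)

theorem exists_indep_subset_card_eq_rk (M : FinMatroid E) (X : Finset E) :
    ∃ J ⊆ X, M.Indep J ∧ #J = M.rk X := by
  obtain ⟨J, hJ, hJc⟩ :=
    exists_mem_eq_sup {J ∈ X.powerset | M.Indep J} ⟨∅, by simp [M.empty_indep]⟩ card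
  exact ⟨J, mem_powerset.1 (mem_filter.1 hJ).1, (mem_filter.1 hJ).2, hJc.symm⟩

theorem Indep.exists_augment {I J : Finset E} (hI : M.Indep I) (hJ : M.Indep J) (h : #I ≤ #J) :
    ∃ Z, M.Indep Z ∧ I ⊆ Z ∧ Z ⊆ I ∪ J ∧ #Z = #J := by
  induction hn : #J - #I generalizing I with
  | zero => exact ⟨I, hI, subset_rfl, subset_union_left, by omega⟩
  | succ _ ih =>
    obtain ⟨e, he, hIe⟩ := M.exchange hI hJ (by omega)
    obtain ⟨heJ, heI⟩ := mem_sdiff.1 he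
    have hcard := card_insert_of_notMem heI
    obtain ⟨Z, hZ, hIZ, hZIJ, hZc⟩ := ih hIe (by omega) (by omega)
    refine ⟨Z, hZ, (subset_insert e I).trans hIZ, hZIJ.trans ?_, hZc⟩
    rw [insert_union, insert_eq_of_mem (mem_union_right _ heJ)]

theorem Indep.exists_superset_card_eq_rk {I X : Finset E} (hI : M.Indep I) (hIX : I ⊆ X) :
    ∃ J, M.Indep J ∧ I ⊆ J ∧ J ⊆ X ∧ #J = M.rk X := by
  obtain ⟨J₀, hJ₀X, hJ₀, hJ₀c⟩ := M.exists_indep_subset_card_eq_rk X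
  obtain ⟨J, hJ, hIJ, hJIJ₀, hJc⟩ := hI.exists_augment hJ₀ (hJ₀c ▸ hI.card_le_rk hIX)
  exact ⟨J, hJ, hIJ, hJIJ₀.trans (union_subset hIX hJ₀X), hJc.trans hJ₀c⟩

end

theorem rk_inter_add_rk_union_le (X Y : Finset E) :
    M.rk (X ∩ Y) + M.rk (X ∪ Y) ≤ M.rk X + M.rk Y := by
  obtain ⟨I, hIXY, hI, hIc⟩ := M.exists_indep_subset_card_eq_rk (X ∩ Y)
  obtain ⟨J, hJ, hIJ, hJXY, hJc⟩ := hI.exists_superset_card_eq_rk (hIXY.trans inter_subset_union)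
  have hX := (M.subset_indep inter_subset_left hJ).card_le_rk (inter_subset_right : J ∩ X ⊆ X)
  have hY := (M.subset_indep inter_subset_left hJ).card_le_rk (inter_subset_right : J ∩ Y ⊆ Y)
  have hunion : J ∩ X ∪ J ∩ Y = J := by rw [← inter_union_distrib_left, inter_eq_left.2 hJXY]
  have hinter : I ⊆ J ∩ X ∩ (J ∩ Y) := by
    rw [← inter_inter_distrib_left]; exact subset_inter hIJ hIXY
  have := card_union_add_card_inter (J ∩ X) (J ∩ Y)
  have := card_le_card hinter
  rw [hunion] at *
  omega

/-- The rank of `Y` in the dual of the restriction of `M` to `X`, when `Y ⊆ X`. -/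
noncomputable def dualRk (M : FinMatroid E) (X Y : Finset E) : ℤ :=
  M.rk (X \ Y) + #Y - M.rk X

theorem dualRk_nonneg (X Y : Finset E) : 0 ≤ M.dualRk X Y := by
  have h := M.rk_inter_add_rk_union_le (X \ Y) (X ∩ Y)
  rw [sdiff_union_inter] at h
  have := (M.rk_le_card (X ∩ Y)).trans (card_le_card inter_subset_right)
  unfold dualRk
  omega

theorem dualRk_le_card (X Y : Finset E) : M.dualRk X Y ≤ #Y := by
  have := M.rk_mono (sdiff_subset : X \ Y ⊆ X)
  unfold dualRk
  omega

theorem dualRk_union_le (X : Finset E) {S T : Finset E} (hST : Disjoint S T) :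
    M.dualRk X (S ∪ T) ≤ M.dualRk X S + M.dualRk X T := by
  have h := M.rk_inter_add_rk_union_le (X \ S) (X \ T)
  rw [← sdiff_union_distrib, ← sdiff_inter_distrib_right, disjoint_iff_inter_eq_empty.1 hST,
    sdiff_empty] at h
  have := card_union_of_disjoint hST
  unfold dualRk
  omega

theorem dualRk_biUnion_le {ι : Type*} [DecidableEq ι] (X : Finset E) {C : Finset ι}
    {S : ι → Finset E} (hS : (C : Set ι).PairwiseDisjoint S) :
    M.dualRk X (C.biUnion S) ≤ ∑ c ∈ C, M.dualRk X (S c) := by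
  induction C using Finset.induction_on with
  | empty => simp [dualRk]
  | insert c C hc ih =>
    rw [coe_insert] at hS
    have hdisj : Disjoint (S c) (C.biUnion S) := (disjoint_biUnion_right _ _ _).2 fun c' hc' =>
      hS (Set.mem_insert _ _) (Set.mem_insert_of_mem _ hc') (ne_of_mem_of_not_mem hc' hc).symm
    rw [biUnion_insert, sum_insert hc]
    linarith [M.dualRk_union_le X hdisj, ih (hS.subset (Set.subset_insert _ _))]

theorem Indep.exists_exchange {A S B : Finset E} (hA : M.Indep A) (hSA : S ⊆ A)
    (hBA : Disjoint B A) (hB : M.Indep (B ∪ A \ S)) (hBS : #B ≤ #S) :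
    ∃ A' ⊆ S, #A' = #B ∧ M.Indep (A \ A' ∪ B) := by
  have hcard : #(B ∪ A \ S) ≤ #A := by
    rw [card_union_of_disjoint (disjoint_of_subset_right sdiff_subset hBA),
      card_sdiff_of_subset hSA]
    have := card_le_card hSA
    omega
  obtain ⟨Z, hZ, hBZ, hZBA, hZc⟩ := hB.exists_augment hA hcard
  have hZ_eq : A \ (A \ Z) ∪ B = Z := by
    ext x
    have := @hBZ x
    have := @hZBA x
    simp only [mem_union, mem_sdiff] at *
    tauto
  refine ⟨A \ Z, fun x hx => ?_, ?_, by rwa [hZ_eq]⟩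
  · rw [mem_sdiff] at hx
    by_contra hxS
    exact hx.2 (hBZ (mem_union_right _ (mem_sdiff.2 ⟨hx.1, hxS⟩)))
  · have h1 := card_sdiff_add_card_eq_card (sdiff_subset : A \ Z ⊆ A)
    have h2 := card_union_of_disjoint (disjoint_of_subset_left sdiff_subset hBA.symm :
      Disjoint (A \ (A \ Z)) B)
    rw [hZ_eq] at h2
    omega

theorem Indep.exists_unicolor_exchange {A S X : Finset E} {T : Finset ℤ} (hA : M.Indep A)
    (hSA : S ⊆ A) (hAX : A ⊆ X) (w : E → ℤ) (hT : T.Nonempty) (hXT : ∀ x ∈ X \ A, w x ∈ T) :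
    ∃ A' ⊆ S, ∃ B' ⊆ X \ A, Unicolor w B' ∧ #A' = #B' ∧ M.Indep (A \ A' ∪ B') ∧
      min (M.rk X - #A + M.dualRk X S) (#T * #S) ≤ #T * #A' := by
  obtain ⟨J, hJ, hAJ, hJX, hJc⟩ :=
    (M.subset_indep sdiff_subset hA).exists_superset_card_eq_rk
      (sdiff_subset_sdiff hAX (subset_refl S))
  have hQ : J \ (A \ S) ⊆ X \ A := fun x hx => by
    have := @hJX x
    simp only [mem_sdiff] at *
    tauto
  obtain ⟨d, -, hd⟩ := exists_card_le_card_mul_card_filter hT w fun x hx => hXT x (hQ hx)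
  obtain ⟨B', hB'd, hB'c⟩ := exists_subset_card_eq (min_le_left #{x ∈ J \ (A \ S) | w x = d} #S)
  have hB'Q : B' ⊆ J \ (A \ S) := hB'd.trans (filter_subset _ _)
  obtain ⟨A', hA'S, hA'c, hind⟩ := hA.exists_exchange hSA
    (disjoint_of_subset_left (hB'Q.trans hQ) sdiff_disjoint)
    (M.subset_indep (union_subset (hB'Q.trans sdiff_subset) hAJ) hJ) (hB'c ▸ min_le_right _ _)
  refine ⟨A', hA'S, B', hB'Q.trans hQ, fun x hx y hy => ?_, hA'c, hind, ?_⟩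
  · rw [(mem_filter.1 (hB'd hx)).2, (mem_filter.1 (hB'd hy)).2]
  · have hQc : M.rk X - #A + M.dualRk X S = #(J \ (A \ S)) := by
      have := card_sdiff_add_card_eq_card hAJ
      have := card_sdiff_add_card_eq_card hSA
      unfold dualRk
      omega
    rw [hQc, hA'c, hB'c, Nat.cast_min, mul_min_of_nonneg _ _ (by positivity)]
    exact min_le_min_right _ (by exact_mod_cast hd)

theorem Indep.exists_color_class {A P U : Finset E} (hA : M.Indep A) (hP : M.Indep P)
    (hPA : Disjoint P A) (hPcard : #P ≤ #A) (hUA : U ⊆ A) {w : E → ℤ} {C : Finset ℤ}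
    (hC : 2 ≤ #C) (hUC : ∀ a ∈ U, w a ∈ C) {K : ℤ} (hK : K ≤ #C * (#U + #P - #A)) :
    ∃ c, K ≤ #C ^ 3 * (M.rk (P ∪ A) - #A + M.dualRk (P ∪ A) {a ∈ U | w a = c}) ∧
      K ≤ #C ^ 4 * #{a ∈ U | w a = c} := by
  have hPU : #P ≤ M.rk ((P ∪ A) \ U) := hP.card_le_rk fun x hx =>
    mem_sdiff.2 ⟨mem_union_left _ hx, fun hxU => disjoint_left.1 hPA hx (hUA hxU)⟩
  have hAX : #A ≤ M.rk (P ∪ A) := hA.card_le_rk subset_union_right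
  have hU : #U = ∑ c ∈ C, #{a ∈ U | w a = c} := card_eq_sum_card_fiberwise hUC
  have hUψ : M.dualRk (P ∪ A) U ≤ ∑ c ∈ C, M.dualRk (P ∪ A) {a ∈ U | w a = c} := by
    conv_lhs => rw [← biUnion_filter_eq_of_maps_to hUC]
    exact dualRk_biUnion_le _ (Set.pairwiseDisjoint_filter w _ U)
  obtain ⟨c, -, hc⟩ := exists_le_pow_three_mul_and_le_pow_four_mul
    (f := fun c => M.dualRk (P ∪ A) {a ∈ U | w a = c}) (g := fun c => (#{a ∈ U | w a = c} : ℤ))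
    (φ := M.rk (P ∪ A) - #A) hC (fun c _ => dualRk_nonneg _ _) (fun c _ => dualRk_le_card _ _)
    (by omega) hUψ
    (hK.trans (mul_le_mul_of_nonneg_left (by unfold dualRk; omega) (by positivity)))
    (hK.trans (mul_le_mul_of_nonneg_left (by rw [hU]; push_cast; omega) (by positivity)))
  exact ⟨c, hc⟩

theorem Indep.exists_unicolor_exchange_of_threshold {A P U : Finset E} (hA : M.Indep A)
    (hP : M.Indep P) (hPA : Disjoint P A) (hPcard : #P ≤ #A) (hUA : U ⊆ A) {w : E → ℤ}
    {C : Finset ℤ} (hC : 2 ≤ #C) (hwC : ∀ x ∈ P ∪ A, w x ∈ C) {K : ℤ}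
    (hK : K ≤ #C * (#U + #P - #A)) :
    ∃ c, ∃ A' ⊆ {a ∈ U | w a = c}, ∃ B' ⊆ P, Unicolor w B' ∧ #A' = #B' ∧
      M.Indep (A \ A' ∪ B') ∧ K ≤ #C ^ 4 * #A' := by
  obtain ⟨c, hcrk, hccard⟩ := hA.exists_color_class hP hPA hPcard hUA hC
    (fun a ha => hwC a (mem_union_right _ (hUA ha))) hK
  obtain ⟨A', hA'c, B', hB'P, hB', hcard, hind, hmin⟩ :=
    hA.exists_unicolor_exchange (S := {a ∈ U | w a = c}) ((filter_subset _ _).trans hUA)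
      subset_union_right w (card_pos.1 (by omega)) fun x hx => hwC x (sdiff_subset hx)
  rw [union_sdiff_right, hPA.sdiff_eq_left] at hB'P
  refine ⟨c, A', hA'c, B', hB'P, hB', hcard, hind, ?_⟩
  rcases min_le_iff.1 hmin with h | h
  · calc K ≤ _ := hcrk
      _ ≤ (#C : ℤ) ^ 3 * (#C * #A') := mul_le_mul_of_nonneg_left h (by positivity)
      _ = _ := by ring
  · exact hccard.trans (mul_le_mul_of_nonneg_left
      (le_of_mul_le_mul_left h (by positivity : (0 : ℤ) < #C)) (by positivity))

end FinMatroid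

theorem monotone_exchange_unicolor_general {E : Type*} [DecidableEq E]
    (M : FinMatroid E) (Δ μ : ℕ) (hΔ : 1 ≤ Δ)
    (w : E → ℤ) (hw : ∀ e, |w e| ≤ (Δ : ℤ))
    (A B : Finset E) (hA : M.Indep A) (hB : M.Indep B) (hAB : Disjoint A B)
    (k : ℕ) (hAk : A.card = k) (hBk : B.card = k)
    (hμ : |(∑ e ∈ A, w e) - (∑ e ∈ B, w e)| ≤ (μ : ℤ)) :
    ∃ A' ⊆ A, ∃ B' ⊆ B,
      Unicolor w A' ∧ Unicolor w B' ∧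
      M.Indep ((A \ A') ∪ B') ∧
      A'.card = B'.card ∧
      ((k : ℝ) - (μ : ℝ)) / (2 * (Δ : ℝ) + 1) ^ 4 ≤ (A'.card : ℝ) ∧
      (∀ a ∈ A', ∀ b ∈ B', w b ≤ w a) := by
  obtain ⟨t, ht⟩ := exists_weight_threshold w Δ hw hAk hBk (abs_le.1 hμ).1
  have hC : (#(Icc (-(Δ : ℤ)) Δ) : ℤ) = 2 * Δ + 1 := by simp only [Int.card_Icc]; omega
  obtain ⟨c, A', hA'c, B', hB'P, hB', hcard, hind, hK⟩ :=
    hA.exists_unicolor_exchange_of_threshold (M.subset_indep (filter_subset _ _) hB)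
      (disjoint_of_subset_left (filter_subset _ _) hAB.symm)
      (hAk ▸ hBk ▸ card_le_card (filter_subset (w · ≤ t) B)) (filter_subset (t ≤ w ·) A)
      (by omega) (fun x _ => mem_Icc.2 (abs_le.1 (hw x))) (K := k - μ)
      (by rw [hC, hAk]; exact ht)
  refine ⟨A', hA'c.trans (filter_subset _ _ |>.trans (filter_subset _ _)), B',
    hB'P.trans (filter_subset _ _), fun x hx y hy => ?_, hB', hind, hcard, ?_, fun a ha b hb => ?_⟩
  · rw [(mem_filter.1 (hA'c hx)).2, (mem_filter.1 (hA'c hy)).2]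
  · rw [div_le_iff₀ (by positivity), mul_comm]
    exact_mod_cast hC ▸ hK
  · exact (mem_filter.1 (hB'P hb)).2.trans (mem_filter.1 (filter_subset _ _ (hA'c ha))).2

/-- Unicolor version of the monotone exchange lemma: the subsets `A' ⊆ A`, `B' ⊆ B`
can additionally be taken unicolor, with cardinality at least `(k − μ)/(2Δ+1)⁴`. -/
theorem monotone_exchange_unicolor {E : Type*} [DecidableEq E] [Fintype E]
    (M : FinMatroid E) (Δ μ : ℕ) (hΔ : 1 ≤ Δ)
    (w : E → ℤ) (hw : ∀ e, |w e| ≤ (Δ : ℤ))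
    (A B : Finset E) (hA : M.Indep A) (hB : M.Indep B) (hAB : Disjoint A B)
    (k : ℕ) (hAk : A.card = k) (hBk : B.card = k)
    (hμ : |(∑ e ∈ A, w e) - (∑ e ∈ B, w e)| ≤ (μ : ℤ)) :
    ∃ A' ⊆ A, ∃ B' ⊆ B,
      Unicolor w A' ∧ Unicolor w B' ∧
      M.Indep ((A \ A') ∪ B') ∧
      A'.card = B'.card ∧
      ((k : ℝ) - (μ : ℝ)) / (2 * (Δ : ℝ) + 1) ^ 4 ≤ (A'.card : ℝ) ∧
      (∀ a ∈ A', ∀ b ∈ B', w b ≤ w a) :=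
  monotone_exchange_unicolor_general M Δ μ hΔ w hw A B hA hB hAB k hAk hBk hμ
end

section
/- Let m ≥ 1 and Δ ≥ 1 be integers, let X ⊆ ℤ^m be a finite set of vectors with all entries in {−Δ,…,Δ}, and let x ∈ X be such that −x ∈ cone(X \ {x}). Then there exist nonnegative integers (λ_y)_{y∈X} such that λ_x ≥ 1, at most m+1 of the λ_y are nonzero, λ_y ≤ Δ^m · m^{m/2} for every y ∈ X, and −λ_x · x = Σ_{y ∈ X \ {x}} λ_y · y. -/
/-!
Carathéodory's theorem for cones writes `-x` as a nonnegative real combination of linearly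
independent vectors of `X \ {x}`; completing them with unit vectors gives a nonsingular integer
matrix `A` whose columns carry a nonnegative solution `c` of `A c = -x`. By Cramer's rule,
`|det A| c_j = |det A_j|`, where `A_j` is `A` with its `j`-th column replaced by `-x`. Taking
`λ_x = |det A|` and `|det A_j|` as the multiplier of the `j`-th column gives integer multipliers
supported on `x` and at most `m` columns; as determinants of integer matrices with entries in
`[-Δ, Δ]` (`Δ ≥ 1` admits the unit vectors) they obey Hadamard's bound `Δ^m m^{m/2}`.
-/

/-- The convex cone of all nonnegative real combinations of a finite set of integer vectors. -/
def coneOf {m : ℕ} (X : Finset (Fin m → ℤ)) : Set (Fin m → ℝ) :=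
  {y | ∃ c : (Fin m → ℤ) → ℝ, (∀ v, 0 ≤ c v) ∧
    y = ∑ v ∈ X, c v • (fun i => (v i : ℝ))}

open Finset Matrix Function

theorem Real.prod_le_sum_div_card_pow {ι : Type*} (s : Finset ι) {z : ι → ℝ}
    (hz : ∀ i ∈ s, 0 ≤ z i) : ∏ i ∈ s, z i ≤ ((∑ i ∈ s, z i) / #s) ^ #s := by
  rcases s.eq_empty_or_nonempty with rfl | hs
  · simp
  have hcard : (#s : ℝ) ≠ 0 := by positivity
  have amgm : ∏ i ∈ s, z i ^ (#s : ℝ)⁻¹ ≤ (∑ i ∈ s, z i) / #s := by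
    convert Real.geom_mean_le_arith_mean_weighted s (fun _ => (#s : ℝ)⁻¹) z
      (fun _ _ => by positivity) (by simp [hcard]) hz using 1
    rw [← mul_sum, inv_mul_eq_div]
  calc ∏ i ∈ s, z i = (∏ i ∈ s, z i ^ (#s : ℝ)⁻¹) ^ #s := by
        rw [← prod_pow]
        exact prod_congr rfl fun i hi =>
          (Real.rpow_inv_natCast_pow (hz i hi) (by simpa using hcard)).symm
    _ ≤ _ := pow_le_pow_left₀ (prod_nonneg fun i hi => Real.rpow_nonneg (hz i hi) _) amgm _

section Hadamard

variable {n : Type*} [Fintype n] [DecidableEq n]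

theorem Matrix.PosSemidef.det_le_trace_div_card_pow {A : Matrix n n ℝ} (hA : A.PosSemidef) :
    A.det ≤ (A.trace / Fintype.card n) ^ Fintype.card n := by
  rw [hA.isHermitian.det_eq_prod_eigenvalues, hA.isHermitian.trace_eq_sum_eigenvalues]
  simpa using Real.prod_le_sum_div_card_pow univ fun i _ => hA.eigenvalues_nonneg i

/-- Hadamard's bound, via AM-GM on the eigenvalues of `Mᴴ M`. -/
theorem Matrix.abs_det_le_of_abs_le {M : Matrix n n ℝ} {Δ : ℝ} (h : ∀ i j, |M i j| ≤ Δ) :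
    |M.det| ≤ Δ ^ Fintype.card n * (Fintype.card n : ℝ) ^ ((Fintype.card n : ℝ) / 2) := by
  rcases isEmpty_or_nonempty n with hn | ⟨⟨i₀⟩⟩
  · simp
  set k := Fintype.card n
  have hΔ : 0 ≤ Δ := (abs_nonneg _).trans (h i₀ i₀)
  have hk : (0 : ℝ) < k := by exact_mod_cast Fintype.card_pos_iff.mpr ⟨i₀⟩
  have hPSD := posSemidef_conjTranspose_mul_self M
  have htrace : (Mᴴ * M).trace ≤ k * (k * Δ ^ 2) := by
    simp only [trace, diag, mul_apply, conjTranspose_apply, star_trivial]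
    calc _ ≤ ∑ _i : n, ∑ _j : n, Δ ^ 2 := by
          gcongr with i _ j _
          nlinarith [abs_mul_abs_self (M j i), abs_nonneg (M j i), h j i]
      _ = k * (k * Δ ^ 2) := by simp [k]
  have hsq : |M.det| ^ 2 ≤ (k * Δ ^ 2) ^ k :=
    calc |M.det| ^ 2 = (Mᴴ * M).det := by
          rw [det_mul, det_conjTranspose, star_trivial, sq_abs, sq]
      _ ≤ ((Mᴴ * M).trace / k) ^ k := hPSD.det_le_trace_div_card_pow
      _ ≤ (k * Δ ^ 2) ^ k := by
          gcongr
          · exact div_nonneg hPSD.trace_nonneg hk.le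
          · rw [div_le_iff₀ hk]; linarith
  have hbound : (k * Δ ^ 2) ^ k = (Δ ^ k * (k : ℝ) ^ ((k : ℝ) / 2)) ^ 2 := by
    rw [mul_pow, mul_pow, ← Real.rpow_natCast ((k : ℝ) ^ ((k : ℝ) / 2)) 2,
      ← Real.rpow_mul hk.le]
    norm_num
    ring
  exact le_of_pow_le_pow_left₀ two_ne_zero (by positivity) (hsq.trans_eq hbound)

theorem Matrix.intCast_abs_det_le_of_abs_le {A : Matrix n n ℤ} {Δ : ℤ} (h : ∀ i j, |A i j| ≤ Δ) :
    ((|A.det| : ℤ) : ℝ) ≤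
      (Δ : ℝ) ^ Fintype.card n * (Fintype.card n : ℝ) ^ ((Fintype.card n : ℝ) / 2) := by
  rw [Int.cast_abs, Int.cast_det]
  exact abs_det_le_of_abs_le fun i j => by simpa using (Int.cast_le (R := ℝ)).mpr (h i j)

end Hadamard

section Cramer

variable {n : Type*} [Fintype n] [DecidableEq n]

theorem RingHom.map_cramer_of_mulVec_eq {R S : Type*} [CommRing R] [CommRing S] (φ : R →+* S)
    {A : Matrix n n R} {b : n → R} {c : n → S} (h : A.map φ *ᵥ c = φ ∘ b) :
    φ ∘ A.cramer b = φ A.det • c := by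
  funext j
  rw [Function.comp_apply, cramer_eq_adjugate_mulVec, φ.map_mulVec, ← RingHom.mapMatrix_apply,
    φ.map_adjugate, RingHom.mapMatrix_apply, ← h, mulVec_mulVec, adjugate_mul, smul_mulVec,
    one_mulVec, φ.map_det]
  rfl

theorem Matrix.exists_nat_mulVec_eq_smul {A : Matrix n n ℤ} (hA : A.det ≠ 0) {b : n → ℤ}
    {c : n → ℝ} (hc : ∀ j, 0 ≤ c j) (h : A.map (↑) *ᵥ c = (↑) ∘ b) {Δ : ℤ}
    (hA_le : ∀ i j, |A i j| ≤ Δ) (hb_le : ∀ i, |b i| ≤ Δ) :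
    ∃ (d : ℕ) (μ : n → ℕ), 1 ≤ d ∧
      (d : ℝ) ≤ (Δ : ℝ) ^ Fintype.card n * (Fintype.card n : ℝ) ^ ((Fintype.card n : ℝ) / 2) ∧
      (∀ j, (μ j : ℝ) ≤
        (Δ : ℝ) ^ Fintype.card n * (Fintype.card n : ℝ) ^ ((Fintype.card n : ℝ) / 2)) ∧
      (∀ j, c j = 0 → μ j = 0) ∧ A *ᵥ (fun j => (μ j : ℤ)) = (d : ℤ) • b := by
  have hcramer : ∀ j, (A.cramer b j : ℝ) = A.det * c j :=
    congrFun ((Int.castRingHom ℝ).map_cramer_of_mulVec_eq h)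
  refine ⟨A.det.natAbs, fun j => (A.cramer b j).natAbs, Int.natAbs_pos.mpr hA, ?_, fun j => ?_,
    fun j hj => ?_, ?_⟩
  · rw [Nat.cast_natAbs]
    exact intCast_abs_det_le_of_abs_le hA_le
  · rw [Nat.cast_natAbs, cramer_apply]
    refine intCast_abs_det_le_of_abs_le fun i k => ?_
    rw [updateCol_apply]
    split_ifs
    exacts [hb_le i, hA_le i k]
  · have := hcramer j
    rw [hj, mul_zero] at this
    simpa using this
  · have habs : (fun j => (((A.cramer b j).natAbs : ℤ) : ℝ)) = |(A.det : ℝ)| • c := by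
      funext j
      rw [Int.natCast_natAbs, Int.cast_abs, hcramer, abs_mul, abs_of_nonneg (hc j)]
      rfl
    have hreal : A.map (↑) *ᵥ (fun j => (((A.cramer b j).natAbs : ℤ) : ℝ)) =
        (↑) ∘ ((A.det.natAbs : ℤ) • b) := by
      rw [habs, mulVec_smul, h]
      funext i
      simp
    apply (Int.cast_injective (α := ℝ)).comp_left
    beta_reduce
    rw [← hreal]
    exact funext ((Int.castRingHom ℝ).map_mulVec A _)

theorem exists_nat_sum_smul_eq_of_linearIndependent {u : n → n → ℤ}
    (hu : LinearIndependent ℝ fun j i => (u j i : ℝ)) {b : n → ℤ} {c : n → ℝ}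
    (hc : ∀ j, 0 ≤ c j) (h : ∑ j, c j • (fun i => (u j i : ℝ)) = fun i => (b i : ℝ)) {Δ : ℤ}
    (hu_le : ∀ j i, |u j i| ≤ Δ) (hb_le : ∀ i, |b i| ≤ Δ) :
    ∃ (d : ℕ) (μ : n → ℕ), 1 ≤ d ∧
      (d : ℝ) ≤ (Δ : ℝ) ^ Fintype.card n * (Fintype.card n : ℝ) ^ ((Fintype.card n : ℝ) / 2) ∧
      (∀ j, (μ j : ℝ) ≤
        (Δ : ℝ) ^ Fintype.card n * (Fintype.card n : ℝ) ^ ((Fintype.card n : ℝ) / 2)) ∧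
      (∀ j, c j = 0 → μ j = 0) ∧ ∑ j, μ j • u j = d • b := by
  set A : Matrix n n ℤ := of fun i j => u j i
  have hA : A.det ≠ 0 := by
    have := linearIndependent_cols_iff_isUnit.mp (show LinearIndependent ℝ (A.map (↑)).col from hu)
    rw [isUnit_iff_isUnit_det, ← Int.cast_det, isUnit_iff_ne_zero] at this
    exact_mod_cast this
  have hAc : A.map (↑) *ᵥ c = (↑) ∘ b := by
    funext i
    have := congrFun h i
    simp only [Finset.sum_apply, Pi.smul_apply, smul_eq_mul] at this
    simp [A, mulVec, dotProduct, ← this, mul_comm]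
  obtain ⟨d, μ, hd, hdB, hμB, hμ0, hAμ⟩ :=
    A.exists_nat_mulVec_eq_smul hA hc hAc (fun i j => hu_le j i) hb_le
  refine ⟨d, μ, hd, hdB, hμB, hμ0, ?_⟩
  rw [← natCast_zsmul, ← hAμ]
  funext i
  simp [A, mulVec, dotProduct, Finset.sum_apply, mul_comm]

end Cramer

section ConicCaratheodory

variable {𝕜 ι V : Type*} [Field 𝕜] [LinearOrder 𝕜] [IsStrictOrderedRing 𝕜]
  [AddCommGroup V] [Module 𝕜 V] (f : ι → V)

/-- Move along the dependency `d` until the first coefficient vanishes. -/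
theorem exists_erase_sum_smul_eq_of_sum_smul_eq_zero [DecidableEq ι] {t : Finset ι}
    {c d : ι → 𝕜} (hc : ∀ i ∈ t, 0 ≤ c i) (hd : ∑ i ∈ t, d i • f i = 0) {i₀ : ι}
    (hi₀ : i₀ ∈ t) (hd₀ : 0 < d i₀) :
    ∃ i ∈ t, ∃ c' : ι → 𝕜, (∀ j ∈ t.erase i, 0 ≤ c' j) ∧
      ∑ j ∈ t.erase i, c' j • f j = ∑ j ∈ t, c j • f j := by
  obtain ⟨i, hi, hmin⟩ := (t.filter (0 < d ·)).exists_min_image (fun j => c j / d j)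
    ⟨i₀, mem_filter.mpr ⟨hi₀, hd₀⟩⟩
  obtain ⟨hit, hdi⟩ := mem_filter.mp hi
  set θ := c i / d i
  have hθ : 0 ≤ θ := div_nonneg (hc i hit) hdi.le
  have hvanish : c i - θ * d i = 0 := by simp [θ, hdi.ne']
  refine ⟨i, hit, fun j => c j - θ * d j, fun j hj => ?_, ?_⟩
  · have hjt := mem_of_mem_erase hj
    rcases lt_or_ge 0 (d j) with hdj | hdj
    · have := hmin j (mem_filter.mpr ⟨hjt, hdj⟩)
      rw [le_div_iff₀ hdj] at this
      linarith
    · nlinarith [hc j hjt]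
  · rw [sum_erase _ (by simp only [hvanish, zero_smul])]
    simp only [sub_smul, sum_sub_distrib, mul_smul, ← smul_sum, hd, smul_zero, sub_zero]

theorem exists_linearIndepOn_sum_smul_eq (t : Finset ι) {c : ι → 𝕜} (hc : ∀ i ∈ t, 0 ≤ c i) :
    ∃ s ⊆ t, LinearIndepOn 𝕜 f s ∧ ∃ g : ι → 𝕜, (∀ i ∈ s, 0 ≤ g i) ∧
      ∑ i ∈ s, g i • f i = ∑ i ∈ t, c i • f i := by
  classical
  induction t using Finset.strongInduction generalizing c with
  | H t ih =>
  by_cases hli : LinearIndepOn 𝕜 f t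
  · exact ⟨t, subset_rfl, hli, c, hc, rfl⟩
  obtain ⟨d, hd, i₀, hi₀, hd₀⟩ := not_linearIndepOn_finset_iff.mp hli
  obtain ⟨i, hit, c', hc', hsum⟩ : ∃ i ∈ t, ∃ c' : ι → 𝕜, (∀ j ∈ t.erase i, 0 ≤ c' j) ∧
      ∑ j ∈ t.erase i, c' j • f j = ∑ j ∈ t, c j • f j := by
    rcases hd₀.lt_or_gt with hneg | hpos
    · refine exists_erase_sum_smul_eq_of_sum_smul_eq_zero f hc (d := -d) ?_ hi₀ (by simpa)
      simp [neg_smul, sum_neg_distrib, hd]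
    · exact exists_erase_sum_smul_eq_of_sum_smul_eq_zero f hc hd hi₀ hpos
  obtain ⟨s, hs, hlis, g, hg, hgsum⟩ := ih _ (erase_ssubset hit) hc'
  exact ⟨s, hs.trans (erase_subset _ _), hlis, g, hg, hgsum.trans hsum⟩

end ConicCaratheodory

theorem exists_linearIndependent_extension_by_single {K ι n : Type*} [Field K] [Fintype n]
    [DecidableEq n] {v : ι → n → K} {e : n → ι} (he : ∀ i, v (e i) = Pi.single i 1) {s : Set ι}
    (hs : LinearIndepOn K v s) :
    ∃ u : n → ι, Injective u ∧ LinearIndependent K (v ∘ u) ∧ s ⊆ Set.range u ∧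
      Set.range u ⊆ s ∪ Set.range e := by
  obtain ⟨b, hbt, hsb, hspan, hli⟩ := exists_linearIndepOn_extension hs Set.subset_union_left
  have htop : ⊤ ≤ Submodule.span K (Set.range fun x : b => v x) := by
    rw [← (Pi.basisFun K n).span_eq, Submodule.span_le, ← Set.image_eq_range]
    rintro _ ⟨i, rfl⟩
    rw [Pi.basisFun_apply, ← he]
    exact hspan (Set.mem_image_of_mem v (Set.mem_union_right s (Set.mem_range_self i)))
  set σ := (Pi.basisFun K n).indexEquiv (Module.Basis.mk hli htop)
  refine ⟨fun i => σ i, Subtype.val_injective.comp σ.injective, hli.comp σ σ.injective,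
    fun w hw => ⟨σ.symm ⟨w, hsb hw⟩, by simp⟩, ?_⟩
  rintro _ ⟨i, rfl⟩
  exact hbt (σ i).2

section Reindexing

variable {ι α : Type*} [Fintype ι] [DecidableEq α] {u : ι → α}

theorem Finset.sum_eq_sum_ite_of_injective {M : Type*} [AddCommMonoid M] (hu : Injective u)
    (T : Finset α) {g : α → M} (hg : ∀ y ∈ T, y ∉ Set.range u → g y = 0) :
    ∑ y ∈ T, g y = ∑ j, if u j ∈ T then g (u j) else 0 := by
  rw [← sum_preimage u T hu.injOn g hg, ← sum_filter]
  congr 1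
  ext j
  simp

theorem Finset.sum_extend_smul {R : Type*} [Semiring R] [AddCommMonoid α] [Module R α]
    (hu : Injective u) (a : ι → R) {T : Finset α} (ha : ∀ j, u j ∉ T → a j = 0) :
    ∑ y ∈ T, extend u a 0 y • y = ∑ j, a j • u j := by
  rw [sum_eq_sum_ite_of_injective hu T fun y _ hy => by
    rw [extend_apply' _ _ _ (by simpa using hy), Pi.zero_apply, zero_smul]]
  refine sum_congr rfl fun j _ => ?_
  rw [hu.extend_apply]
  split_ifs with hj
  · rfl
  · rw [ha j hj, zero_smul]

theorem card_filter_update_extend_ne_zero_le {M : Type*} [Zero M] [DecidableEq M] (a : ι → M)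
    (x : α) (d : M) (S : Finset α) :
    #(S.filter fun y => update (extend u a 0) x d y ≠ 0) ≤ Fintype.card ι + 1 :=
  calc #(S.filter fun y => update (extend u a 0) x d y ≠ 0) ≤ #(insert x (univ.image u)) := by
        refine card_le_card fun y hy => ?_
        rcases eq_or_ne y x with rfl | hyx
        · exact mem_insert_self _ _
        have := (mem_filter.mp hy).2
        rw [update_of_ne hyx, ← mem_support] at this
        obtain ⟨j, -, rfl⟩ := support_extend_zero_subset this
        simp
    _ ≤ Fintype.card ι + 1 := (card_insert_le _ _).trans (Nat.add_le_add_right card_image_le 1)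

theorem update_extend_zero_mem_insert {M : Type*} [Zero M] (hu : Injective u) (a : ι → M)
    (x : α) (d : M) (y : α) :
    update (extend u a 0) x d y ∈ insert d (insert 0 (Set.range a)) := by
  rcases eq_or_ne y x with rfl | hyx
  · simp
  rw [update_of_ne hyx]
  by_cases hy : ∃ j, u j = y
  · obtain ⟨j, rfl⟩ := hy
    simp [hu.extend_apply]
  · simp [extend_apply' _ _ _ hy]

end Reindexing

theorem exists_basis_of_mem_coneOf {m : ℕ} {T : Finset (Fin m → ℤ)} {y : Fin m → ℝ}
    (hy : y ∈ coneOf T) :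
    ∃ u : Fin m → Fin m → ℤ, Injective u ∧ (∀ j, u j ∈ T ∨ ∃ i, u j = Pi.single i 1) ∧
      LinearIndependent ℝ (fun j i => (u j i : ℝ)) ∧ ∃ c : Fin m → ℝ, (∀ j, 0 ≤ c j) ∧
        (∀ j, u j ∉ T → c j = 0) ∧ ∑ j, c j • (fun i => (u j i : ℝ)) = y := by
  obtain ⟨c, hc, rfl⟩ := hy
  set v : (Fin m → ℤ) → Fin m → ℝ := fun w i => (w i : ℝ)
  obtain ⟨s, hsT, hs, g, hg, hgsum⟩ := exists_linearIndepOn_sum_smul_eq v T fun w _ => hc w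
  have hsingle : ∀ i, v (Pi.single i 1) = Pi.single i 1 := fun i => by
    funext k
    by_cases hk : k = i <;> simp [v, hk]
  obtain ⟨u, hu, hli, hsu, hus⟩ := exists_linearIndependent_extension_by_single hsingle hs
  refine ⟨u, hu, fun j => ?_, hli, fun j => if u j ∈ s then g (u j) else 0,
    fun j => ?_, fun j hj => if_neg fun hjs => hj (hsT hjs), ?_⟩
  · rcases hus (Set.mem_range_self j) with hj | ⟨i, hi⟩
    exacts [Or.inl (hsT hj), Or.inr ⟨i, hi.symm⟩]
  · dsimp only
    split_ifs with hj
    exacts [hg _ hj, le_rfl]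
  · rw [← hgsum, sum_eq_sum_ite_of_injective hu s fun w hw hwu => absurd (hsu hw) hwu]
    simp only [ite_smul, zero_smul]
    rfl

theorem integer_caratheodory_general (m Δ : ℕ) (hΔ : 1 ≤ Δ)
    (X : Finset (Fin m → ℤ)) (hX : ∀ v ∈ X, ∀ i, |v i| ≤ (Δ : ℤ))
    (x : Fin m → ℤ) (hxX : x ∈ X)
    (hx : (fun i => (-(x i) : ℝ)) ∈ coneOf (X.erase x)) :
    ∃ lam : (Fin m → ℤ) → ℕ,
      1 ≤ lam x ∧
      (X.filter fun y => lam y ≠ 0).card ≤ m + 1 ∧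
      (∀ y ∈ X, (lam y : ℝ) ≤ (Δ : ℝ) ^ m * (m : ℝ) ^ ((m : ℝ) / 2)) ∧
      (-(lam x : ℤ)) • x = ∑ y ∈ X.erase x, (lam y : ℤ) • y := by
  obtain ⟨u, hu, hmem, hli, c, hc, hc0, hsum⟩ := exists_basis_of_mem_coneOf hx
  have hu_le : ∀ j i, |u j i| ≤ Δ := fun j i => by
    rcases hmem j with hj | ⟨k, hk⟩
    · exact hX _ (mem_of_mem_erase hj) i
    · rw [hk, Pi.single_apply]
      split_ifs
      · simpa using hΔ
      · simp
  obtain ⟨d, μ, hd, hdB, hμB, hμ0, hcomb⟩ := exists_nat_sum_smul_eq_of_linearIndependent hli hc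
    (b := -x) (by simpa using hsum) hu_le (fun i => by simpa using hX x hxX i)
  simp only [Fintype.card_fin, Int.cast_natCast] at hdB hμB
  refine ⟨update (extend u μ 0) x d, by simpa using hd,
    (card_filter_update_extend_ne_zero_le μ x d X).trans (by simp), fun y _ => ?_, ?_⟩
  · rcases update_extend_zero_mem_insert hu μ x d y with h | h | ⟨j, h⟩
    · rw [h]
      exact hdB
    · rw [h, Nat.cast_zero]
      positivity
    · exact h ▸ hμB j
  · rw [sum_congr rfl fun y hy => by rw [update_of_ne (ne_of_mem_erase hy), natCast_zsmul],
      sum_extend_smul hu μ fun j hj => hμ0 j (hc0 j hj), hcomb]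
    simp

/-- If `−x ∈ cone(X \ {x})`, then there are nonnegative integer multipliers `λ`, with
`λ_x ≥ 1`, at most `m+1` nonzero entries, each bounded by `Δ^m · m^{m/2}`, such that
`−λ_x x = Σ_{y ∈ X \ {x}} λ_y y`. -/
theorem integer_caratheodory (m Δ : ℕ) (hm : 1 ≤ m) (hΔ : 1 ≤ Δ)
    (X : Finset (Fin m → ℤ)) (hX : ∀ v ∈ X, ∀ i, |v i| ≤ (Δ : ℤ))
    (x : Fin m → ℤ) (hxX : x ∈ X)
    (hx : (fun i => (-(x i) : ℝ)) ∈ coneOf (X.erase x)) :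
    ∃ lam : (Fin m → ℤ) → ℕ,
      1 ≤ lam x ∧
      (X.filter fun y => lam y ≠ 0).card ≤ m + 1 ∧
      (∀ y ∈ X, (lam y : ℝ) ≤ (Δ : ℝ) ^ m * (m : ℝ) ^ ((m : ℝ) / 2)) ∧
      (-(lam x : ℤ)) • x = ∑ y ∈ X.erase x, (lam y : ℤ) • y :=
  integer_caratheodory_general m Δ hΔ X hX x hxX hx
end

section
/- For every integer n ≥ 8 divisible by 4 there exist a finite ground set E with |E| = n, two matroids M = (E, 𝓘) and M' = (E, 𝓘') on E, a weight function w : E → {0, 1} ⊆ ℤ, and a point x* ∈ ℝ^E, such that: x* is an extreme point of the set P_B(M) ∩ P_B(M') ∩ {x ∈ ℝ^E : Σ_{e∈E} w(e)·x_e = 1}; there is a unique common basis B of M and M' with w(B) = 1; and this B satisfies ‖x* − χ(B)‖₁ = (3/4)·n. -/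
namespace HP

def partitionMatroid {n : ℕ} (p : Fin n → ℕ) : FinMatroid (Fin n) where
  Indep X := Set.InjOn p ↑X
  empty_indep := by simp
  subset_indep := by
    intro X Y hXY h
    exact h.mono (by exact_mod_cast hXY)
  exchange := by
    intro X Y hX hY hcard
    have hx : (X.image p).card = X.card := Finset.card_image_of_injOn hX
    have hy : (Y.image p).card = Y.card := Finset.card_image_of_injOn hY
    have hns : ¬ (Y.image p ⊆ X.image p) := by
      intro hsub
      have := Finset.card_le_card hsub
      omega
    obtain ⟨v, hvY, hvX⟩ := Finset.not_subset.1 hns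
    obtain ⟨e, heY, hev⟩ := Finset.mem_image.1 hvY
    have heX : e ∉ X := fun h => hvX (Finset.mem_image.2 ⟨e, h, hev⟩)
    refine ⟨e, Finset.mem_sdiff.2 ⟨heY, heX⟩, ?_⟩
    show Set.InjOn p ↑(insert e X)
    rw [Finset.coe_insert]
    rw [Set.injOn_insert (by exact_mod_cast heX)]
    refine ⟨hX, ?_⟩
    rintro ⟨b, hb, hpb⟩
    exact hvX (Finset.mem_image.2 ⟨b, by exact_mod_cast hb, by rw [hpb, hev]⟩)

lemma partitionMatroid_isBase_iff {n : ℕ} (p : Fin n → ℕ) (B : Finset (Fin n)) :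
    (partitionMatroid p).IsBase B ↔
      Set.InjOn p ↑B ∧ ∀ e, ∃ b ∈ B, p b = p e := by
  constructor
  · rintro ⟨hi, hmax⟩
    refine ⟨hi, fun e => ?_⟩
    by_contra h
    push_neg at h
    have heB : e ∉ B := fun hm => h e hm rfl
    have hind : Set.InjOn p ↑(insert e B) := by
      rw [Finset.coe_insert, Set.injOn_insert (by exact_mod_cast heB)]
      refine ⟨hi, ?_⟩
      rintro ⟨b, hb, hpb⟩
      exact h b (by exact_mod_cast hb) hpb
    have := hmax hind (Finset.subset_insert e B)
    exact heB (this ▸ Finset.mem_insert_self e B)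
  · rintro ⟨hi, hcov⟩
    refine ⟨hi, fun X hX hBX => ?_⟩
    refine Finset.Subset.antisymm (fun e he => ?_) hBX
    obtain ⟨b, hbB, hpb⟩ := hcov e
    have : b = e := hX (by exact_mod_cast hBX hbB) (by exact_mod_cast he) hpb
    exact this ▸ hbB

section Inv
variable {N : ℕ} (τ : Fin N → Fin N)

def pmin : Fin N → ℕ := fun e => min e.val (τ e).val

def invMatroid : FinMatroid (Fin N) := partitionMatroid (pmin τ)

lemma pmin_eq_iff (hinv : ∀ e, τ (τ e) = e) (c e : Fin N) :
    pmin τ c = pmin τ e ↔ (c = e ∨ c = τ e) := by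
  constructor
  · intro h
    simp only [pmin] at h
    have key : c.val = e.val ∨ c.val = (τ e).val ∨ (τ c).val = e.val ∨ (τ c).val = (τ e).val := by
      omega
    rcases key with h | h | h | h
    · exact Or.inl (Fin.ext h)
    · exact Or.inr (Fin.ext h)
    · have hce : τ c = e := Fin.ext h
      exact Or.inr (by rw [← hce, hinv])
    · have h2 : τ c = τ e := Fin.ext h
      have h3 := congrArg τ h2
      rw [hinv, hinv] at h3
      exact Or.inl h3
  · rintro (rfl | rfl)
    · rfl
    · simp only [pmin]
      rw [hinv e]
      exact min_comm _ _

lemma invMatroid_isBase_iff (hinv : ∀ e, τ (τ e) = e) (B : Finset (Fin N)) (hne : ∀ e, τ e ≠ e) :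
    (invMatroid τ).IsBase B ↔ ∀ e, (e ∈ B ↔ τ e ∉ B) := by
  rw [invMatroid, partitionMatroid_isBase_iff]
  constructor
  · rintro ⟨hi, hcov⟩ e
    constructor
    · intro heB hteB
      have : τ e = e := hi (by exact_mod_cast hteB) (by exact_mod_cast heB)
        ((pmin_eq_iff τ hinv (τ e) e).2 (Or.inr rfl))
      exact hne e this
    · intro hteB
      obtain ⟨b, hbB, hpb⟩ := hcov e
      rcases (pmin_eq_iff τ hinv b e).1 hpb with rfl | rfl
      · exact hbB
      · exact absurd hbB hteB
  · intro h
    constructor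
    · intro c hc e he hpe
      rcases (pmin_eq_iff τ hinv c e).1 hpe with rfl | rfl
      · rfl
      · exact absurd (h e |>.1 (by exact_mod_cast he)) (not_not.2 (by exact_mod_cast hc))
    · intro e
      by_cases heB : e ∈ B
      · exact ⟨e, heB, rfl⟩
      · refine ⟨τ e, ?_, (pmin_eq_iff τ hinv (τ e) e).2 (Or.inr rfl)⟩
        by_contra hte
        exact heB ((h e).2 hte)

lemma mem_basePolytope_props (hinv : ∀ e, τ (τ e) = e) (hne : ∀ e, τ e ≠ e) (y : Fin N → ℝ)
    (hy : y ∈ basePolytope (invMatroid τ)) :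
    (∀ e, 0 ≤ y e) ∧ (∀ e, y e + y (τ e) = 1) := by
  have hsub : {x : Fin N → ℝ | ∃ B : Finset (Fin N), (invMatroid τ).IsBase B ∧ x = chi B} ⊆
      {y : Fin N → ℝ | (∀ e, 0 ≤ y e) ∧ (∀ e, y e + y (τ e) = 1)} := by
    rintro x ⟨B, hB, rfl⟩
    rw [invMatroid_isBase_iff τ hinv B hne] at hB
    constructor
    · intro e
      simp only [chi]
      split <;> norm_num
    · intro e
      have := hB e
      simp only [chi]
      by_cases heB : e ∈ B
      · have : τ e ∉ B := (hB e).1 heB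
        simp [heB, this]
      · have : τ e ∈ B := by
          by_contra h
          exact heB ((hB e).2 h)
        simp [heB, this]
  have hconv : Convex ℝ {y : Fin N → ℝ | (∀ e, 0 ≤ y e) ∧ (∀ e, y e + y (τ e) = 1)} := by
    rintro u ⟨hu1, hu2⟩ v ⟨hv1, hv2⟩ a b ha hb hab
    constructor
    · intro e
      have : (a • u + b • v) e = a * u e + b * v e := by simp [smul_eq_mul]
      rw [this]
      have := hu1 e; have := hv1 e
      positivity
    · intro e
      have h1 : (a • u + b • v) e = a * u e + b * v e := by simp [smul_eq_mul]
      have h2 : (a • u + b • v) (τ e) = a * u (τ e) + b * v (τ e) := by simp [smul_eq_mul]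
      rw [h1, h2]
      have := hu2 e; have := hv2 e
      nlinarith
  exact convexHull_min hsub hconv hy

end Inv

def f1 : ℕ → ℕ := fun v => if v % 2 = 0 then v + 1 else v - 1

def g2 (m : ℕ) : ℕ → ℕ := fun pos =>
  if pos % 2 = 1 then (if pos = 2*m - 1 then 0 else pos + 1)
  else (if pos = 0 then 2*m - 1 else pos - 1)

def f2 (m : ℕ) : ℕ → ℕ := fun v =>
  if v < 2*m then g2 m v else 2*m + g2 m (v - 2*m)

lemma f1_lt (m v : ℕ) (h : v < 4*m) : f1 v < 4*m := by
  simp only [f1]; split <;> omega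

lemma g2_lt (m pos : ℕ) (h : pos < 2*m) : g2 m pos < 2*m := by
  simp only [g2]
  split_ifs <;> try contradiction
  all_goals omega

lemma g2_inv (m pos : ℕ) (h : pos < 2*m) : g2 m (g2 m pos) = pos := by
  unfold g2
  split_ifs <;> try contradiction
  all_goals omega

lemma g2_ne (m pos : ℕ) (h : pos < 2*m) : g2 m pos ≠ pos := by
  unfold g2
  split_ifs <;> try contradiction
  all_goals omega

lemma f2_lt (m v : ℕ) (h : v < 4*m) : f2 m v < 4*m := by
  simp only [f2]
  split_ifs with h1
  · have := g2_lt m v h1; omega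
  · have := g2_lt m (v - 2*m) (by omega); omega

def tau1 (m : ℕ) : Fin (4*m) → Fin (4*m) := fun e => ⟨f1 e.val, f1_lt m _ e.isLt⟩

def tau2 (m : ℕ) : Fin (4*m) → Fin (4*m) := fun e => ⟨f2 m e.val, f2_lt m _ e.isLt⟩

lemma tau1_inv (m : ℕ) : ∀ e, tau1 m (tau1 m e) = e := by
  intro e
  apply Fin.ext
  show f1 (f1 e.val) = e.val
  simp only [f1]
  split_ifs <;> omega

lemma tau1_ne (m : ℕ) : ∀ e, tau1 m e ≠ e := by
  intro e h
  have h' : f1 e.val = e.val := congrArg Fin.val h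
  simp only [f1] at h'
  split_ifs at h' <;> omega

lemma f2_inv (m v : ℕ) (hlt : v < 4*m) : f2 m (f2 m v) = v := by
  simp only [f2]
  split_ifs with h1 h2 h2
  · exact g2_inv m v h1
  · exact absurd (g2_lt m v h1) h2
  · have := g2_lt m (v - 2*m) (by omega); omega
  · have h3 := g2_inv m (v - 2*m) (by omega)
    have := g2_lt m (v - 2*m) (by omega)
    have h4 : 2*m + g2 m (v - 2*m) - 2*m = g2 m (v - 2*m) := by omega
    rw [h4, h3]
    omega

lemma tau2_inv (m : ℕ) : ∀ e, tau2 m (tau2 m e) = e := by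
  intro e
  apply Fin.ext
  exact f2_inv m e.val e.isLt

lemma tau2_ne (m : ℕ) : ∀ e, tau2 m e ≠ e := by
  intro e h
  have hlt := e.isLt
  have h' : f2 m (e.val) = e.val := congrArg Fin.val h
  simp only [f2] at h'
  split_ifs at h' with h1
  · exact g2_ne m e.val h1 h'
  · have := g2_ne m (e.val - 2*m) (by omega)
    omega

lemma chainAll (m : ℕ) (hm : 2 ≤ m) (y : Fin (4*m) → ℝ)
    (h1 : ∀ e, y e + y (tau1 m e) = 1) (h2 : ∀ e, y e + y (tau2 m e) = 1) :
    ∀ v (hv : v < 4*m), y ⟨v, hv⟩ =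
      if v < 2*m then (if v % 2 = 0 then y ⟨0, by omega⟩ else 1 - y ⟨0, by omega⟩)
      else (if v % 2 = 0 then y ⟨2*m, by omega⟩ else 1 - y ⟨2*m, by omega⟩) := by
  set Y : ℕ → ℝ := fun v => if h : v < 4*m then y ⟨v, h⟩ else 0 with hYdef
  have hYeq : ∀ v (hv : v < 4*m), Y v = y ⟨v, hv⟩ := fun v hv => dif_pos hv
  have hY1 : ∀ v, v < 4*m → v % 2 = 0 → Y v + Y (v+1) = 1 := by
    intro v hv hpar
    have h := h1 ⟨v, hv⟩
    have ht : tau1 m ⟨v, hv⟩ = ⟨v+1, by omega⟩ := by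
      apply Fin.ext
      show f1 v = v + 1
      simp [f1, hpar]
    rw [ht] at h
    rw [hYeq v hv, hYeq (v+1) (by omega)]
    exact h
  have hY2 : ∀ v, v < 4*m → v % 2 = 1 → v + 1 ≠ 2*m → v + 1 ≠ 4*m →
      Y v + Y (v+1) = 1 := by
    intro v hv hpar hne1 hne2
    have h := h2 ⟨v, hv⟩
    have ht : tau2 m ⟨v, hv⟩ = ⟨v+1, by omega⟩ := by
      apply Fin.ext
      show f2 m v = v + 1
      simp only [f2, g2]
      split_ifs <;> try contradiction
      all_goals omega
    rw [ht] at h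
    rw [hYeq v hv, hYeq (v+1) (by omega)]
    exact h
  have chain : ∀ o, o = 0 ∨ o = 2*m → ∀ k, k < m →
      Y (o + 2*k) = Y o ∧ Y (o + 2*k + 1) = 1 - Y o := by
    intro o ho k
    induction k with
    | zero =>
      intro _
      refine ⟨by norm_num, ?_⟩
      have h := hY1 o (by omega) (by omega)
      have e1 : o + 2*0 + 1 = o + 1 := by ring
      rw [e1]
      linarith
    | succ k ih =>
      intro hk
      obtain ⟨ih1, ih2⟩ := ih (by omega)
      have ha := hY2 (o + 2*k + 1) (by omega) (by omega) (by omega) (by omega)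
      have hb := hY1 (o + 2*k + 2) (by omega) (by omega)
      have e1 : o + 2*k + 1 + 1 = o + 2*k + 2 := by ring
      rw [e1] at ha
      have e2 : o + 2*k + 2 + 1 = o + 2*k + 3 := by ring
      rw [e2] at hb
      have e3 : o + 2*(k+1) = o + 2*k + 2 := by ring
      have e4 : o + 2*(k+1) + 1 = o + 2*k + 3 := by ring
      rw [e3, e2]
      constructor
      · linarith
      · linarith
  intro v hv
  rw [← hYeq v hv]
  have h0 : Y 0 = y ⟨0, by omega⟩ := hYeq 0 (by omega)
  have h2m : Y (2*m) = y ⟨2*m, by omega⟩ := hYeq (2*m) (by omega)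
  by_cases hhalf : v < 2*m
  · by_cases hpar : v % 2 = 0
    · have hk := (chain 0 (Or.inl rfl) (v/2) (by omega)).1
      have e1 : 0 + 2*(v/2) = v := by omega
      rw [e1] at hk
      rw [hk, if_pos hhalf, if_pos hpar, h0]
    · have hk := (chain 0 (Or.inl rfl) (v/2) (by omega)).2
      have e1 : 0 + 2*(v/2) + 1 = v := by omega
      rw [e1] at hk
      rw [hk, if_pos hhalf, if_neg hpar, h0]
  · by_cases hpar : v % 2 = 0
    · have hk := (chain (2*m) (Or.inr rfl) ((v - 2*m)/2) (by omega)).1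
      have e1 : 2*m + 2*((v - 2*m)/2) = v := by omega
      rw [e1] at hk
      rw [hk, if_neg hhalf, if_pos hpar, h2m]
    · have hk := (chain (2*m) (Or.inr rfl) ((v - 2*m)/2) (by omega)).2
      have e1 : 2*m + 2*((v - 2*m)/2) + 1 = v := by omega
      rw [e1] at hk
      rw [hk, if_neg hhalf, if_neg hpar, h2m]

def Bset (m : ℕ) : Finset (Fin (4*m)) :=
  Finset.univ.filter (fun e => (e.val < 2*m ∧ e.val % 2 = 0) ∨ (2*m ≤ e.val ∧ e.val % 2 = 1))

def B10 (m : ℕ) : Finset (Fin (4*m)) :=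
  Finset.univ.filter (fun e => (e.val < 2*m ∧ e.val % 2 = 1) ∨ (2*m ≤ e.val ∧ e.val % 2 = 0))

def B11 (m : ℕ) : Finset (Fin (4*m)) :=
  Finset.univ.filter (fun e => e.val % 2 = 1)

def wgt (m : ℕ) : Fin (4*m) → ℤ :=
  fun e => if e.val = 0 ∨ e.val = 2*m ∨ e.val = 2*m + 2 then 1 else 0

noncomputable def xstar (m : ℕ) : Fin (4*m) → ℝ :=
  fun e => if e.val < 2*m then (if e.val % 2 = 0 then 0 else 1) else 1/2

lemma Bset_base1 (m : ℕ) : (invMatroid (tau1 m)).IsBase (Bset m) := by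
  rw [invMatroid_isBase_iff _ (tau1_inv m) _ (tau1_ne m)]
  intro e
  have hlt := e.isLt
  have hval : (tau1 m e).val = f1 ↑e := rfl
  simp only [Bset, Finset.mem_filter, Finset.mem_univ, true_and, hval]
  simp only [f1]
  split_ifs <;> try contradiction
  all_goals try omega
  all_goals norm_num
  all_goals omega

lemma Bset_base2 (m : ℕ) : (invMatroid (tau2 m)).IsBase (Bset m) := by
  rw [invMatroid_isBase_iff _ (tau2_inv m) _ (tau2_ne m)]
  intro e
  have hlt := e.isLt
  have hval : (tau2 m e).val = f2 m ↑e := rfl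
  simp only [Bset, Finset.mem_filter, Finset.mem_univ, true_and, hval]
  simp only [f2, g2]
  split_ifs <;> try contradiction
  all_goals try omega
  all_goals norm_num
  all_goals omega

lemma B10_base1 (m : ℕ) : (invMatroid (tau1 m)).IsBase (B10 m) := by
  rw [invMatroid_isBase_iff _ (tau1_inv m) _ (tau1_ne m)]
  intro e
  have hlt := e.isLt
  have hval : (tau1 m e).val = f1 ↑e := rfl
  simp only [B10, Finset.mem_filter, Finset.mem_univ, true_and, hval]
  simp only [f1]
  split_ifs <;> try contradiction
  all_goals try omega
  all_goals norm_num
  all_goals omega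

lemma B10_base2 (m : ℕ) : (invMatroid (tau2 m)).IsBase (B10 m) := by
  rw [invMatroid_isBase_iff _ (tau2_inv m) _ (tau2_ne m)]
  intro e
  have hlt := e.isLt
  have hval : (tau2 m e).val = f2 m ↑e := rfl
  simp only [B10, Finset.mem_filter, Finset.mem_univ, true_and, hval]
  simp only [f2, g2]
  split_ifs <;> try contradiction
  all_goals try omega
  all_goals norm_num
  all_goals omega

lemma B11_base1 (m : ℕ) : (invMatroid (tau1 m)).IsBase (B11 m) := by
  rw [invMatroid_isBase_iff _ (tau1_inv m) _ (tau1_ne m)]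
  intro e
  have hlt := e.isLt
  have hval : (tau1 m e).val = f1 ↑e := rfl
  simp only [B11, Finset.mem_filter, Finset.mem_univ, true_and, hval]
  simp only [f1]
  split_ifs <;> try contradiction
  all_goals try omega
  all_goals norm_num
  all_goals omega

lemma B11_base2 (m : ℕ) : (invMatroid (tau2 m)).IsBase (B11 m) := by
  rw [invMatroid_isBase_iff _ (tau2_inv m) _ (tau2_ne m)]
  intro e
  have hlt := e.isLt
  have hval : (tau2 m e).val = f2 m ↑e := rfl
  simp only [B11, Finset.mem_filter, Finset.mem_univ, true_and, hval]
  simp only [f2, g2]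
  split_ifs <;> try contradiction
  all_goals try omega
  all_goals norm_num
  all_goals omega

lemma wsum (m : ℕ) (hm : 2 ≤ m) (y : Fin (4*m) → ℝ) :
    ∑ e, (wgt m e : ℝ) * y e =
      y ⟨0, by omega⟩ + y ⟨2*m, by omega⟩ + y ⟨2*m+2, by omega⟩ := by
  have hsplit : ∀ e : Fin (4*m), (wgt m e : ℝ) * y e =
      (if e = ⟨0, by omega⟩ then y e else 0) +
      (if e = ⟨2*m, by omega⟩ then y e else 0) +
      (if e = ⟨2*m+2, by omega⟩ then y e else 0) := by
    intro e
    simp only [wgt, Fin.ext_iff]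
    split_ifs <;> first | (exfalso; omega) | (push_cast; ring1)
  rw [Finset.sum_congr rfl (fun e _ => hsplit e)]
  rw [Finset.sum_add_distrib, Finset.sum_add_distrib]
  simp [Finset.sum_ite_eq']

lemma wsumZ (m : ℕ) (hm : 2 ≤ m) (C : Finset (Fin (4*m))) :
    ∑ e ∈ C, wgt m e =
      (if (⟨0, by omega⟩ : Fin (4*m)) ∈ C then 1 else 0) +
      (if (⟨2*m, by omega⟩ : Fin (4*m)) ∈ C then 1 else 0) +
      (if (⟨2*m+2, by omega⟩ : Fin (4*m)) ∈ C then 1 else 0) := by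
  have hsplit : ∀ e : Fin (4*m), wgt m e =
      (if e = ⟨0, by omega⟩ then 1 else 0) +
      (if e = ⟨2*m, by omega⟩ then 1 else 0) +
      (if e = ⟨2*m+2, by omega⟩ then (1:ℤ) else 0) := by
    intro e
    simp only [wgt, Fin.ext_iff]
    split_ifs <;> first | (exfalso; omega) | ring1
  rw [Finset.sum_congr rfl (fun e _ => hsplit e)]
  rw [Finset.sum_add_distrib, Finset.sum_add_distrib]
  simp [Finset.sum_ite_eq']

end HP

/-- High proximity for matroid intersection: for every `n ≥ 8` divisible by `4` there are
two matroids on `n` elements, `0/1`-weights `w`, and a vertex `x*` of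
`P_B(M) ∩ P_B(M') ∩ {wᵀx = 1}` such that the unique common basis `B` with `w(B) = 1`
satisfies `‖x* − χ(B)‖₁ = (3/4)n`. -/
theorem matroid_intersection_high_proximity (n : ℕ) (hn : 8 ≤ n) (hdvd : 4 ∣ n) :
    ∃ (M M' : FinMatroid (Fin n)) (w : Fin n → ℤ) (x : Fin n → ℝ) (B : Finset (Fin n)),
      (∀ e, w e = 0 ∨ w e = 1) ∧
      x ∈ Set.extremePoints ℝ
        (basePolytope M ∩ basePolytope M' ∩
          {y : Fin n → ℝ | ∑ e, (w e : ℝ) * y e = 1}) ∧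
      M.IsBase B ∧ M'.IsBase B ∧ (∑ e ∈ B, w e) = 1 ∧
      (∀ C : Finset (Fin n), M.IsBase C → M'.IsBase C → (∑ e ∈ C, w e) = 1 → C = B) ∧
      (∑ e, |x e - chi B e|) = 3 / 4 * (n : ℝ) := by
  obtain ⟨m, rfl⟩ := hdvd
  have hm : 2 ≤ m := by omega
  clear hn
  -- value facts for xstar
  have hx0 : HP.xstar m ⟨0, by omega⟩ = 0 := by
    show (if (0:ℕ) < 2*m then (if (0:ℕ) % 2 = 0 then (0:ℝ) else 1) else 1/2) = 0
    rw [if_pos (by omega)]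
    norm_num
  have hx1 : HP.xstar m ⟨2*m, by omega⟩ = 1/2 := by
    show (if 2*m < 2*m then (if (2*m) % 2 = 0 then (0:ℝ) else 1) else 1/2) = 1/2
    rw [if_neg (by omega)]
  have hx2 : HP.xstar m ⟨2*m+2, by omega⟩ = 1/2 := by
    show (if 2*m+2 < 2*m then (if (2*m+2) % 2 = 0 then (0:ℝ) else 1) else 1/2) = 1/2
    rw [if_neg (by omega)]
  refine ⟨HP.invMatroid (HP.tau1 m), HP.invMatroid (HP.tau2 m), HP.wgt m, HP.xstar m,
    HP.Bset m, ?_, ?_, HP.Bset_base1 m, HP.Bset_base2 m, ?_, ?_, ?_⟩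
  · -- 0/1 weights
    intro e
    simp only [HP.wgt]
    split_ifs <;> simp
  · -- extreme point
    rw [mem_extremePoints]
    constructor
    · -- membership
      refine ⟨⟨?_, ?_⟩, ?_⟩
      · have m1 : chi (HP.B10 m) ∈ basePolytope (HP.invMatroid (HP.tau1 m)) :=
          subset_convexHull ℝ _ ⟨HP.B10 m, HP.B10_base1 m, rfl⟩
        have m2 : chi (HP.B11 m) ∈ basePolytope (HP.invMatroid (HP.tau1 m)) :=
          subset_convexHull ℝ _ ⟨HP.B11 m, HP.B11_base1 m, rfl⟩
        have hcomb : HP.xstar m = (1/2 : ℝ) • chi (HP.B10 m) + (1/2 : ℝ) • chi (HP.B11 m) := by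
          funext e
          have hlt := e.isLt
          simp only [HP.xstar, chi, HP.B10, HP.B11, Finset.mem_filter, Finset.mem_univ,
            true_and, Pi.add_apply, Pi.smul_apply, smul_eq_mul]
          split_ifs <;> first | (exfalso; omega) | norm_num
        rw [hcomb]
        exact (convex_convexHull ℝ _) m1 m2 (by norm_num) (by norm_num) (by norm_num)
      · have m1 : chi (HP.B10 m) ∈ basePolytope (HP.invMatroid (HP.tau2 m)) :=
          subset_convexHull ℝ _ ⟨HP.B10 m, HP.B10_base2 m, rfl⟩
        have m2 : chi (HP.B11 m) ∈ basePolytope (HP.invMatroid (HP.tau2 m)) :=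
          subset_convexHull ℝ _ ⟨HP.B11 m, HP.B11_base2 m, rfl⟩
        have hcomb : HP.xstar m = (1/2 : ℝ) • chi (HP.B10 m) + (1/2 : ℝ) • chi (HP.B11 m) := by
          funext e
          have hlt := e.isLt
          simp only [HP.xstar, chi, HP.B10, HP.B11, Finset.mem_filter, Finset.mem_univ,
            true_and, Pi.add_apply, Pi.smul_apply, smul_eq_mul]
          split_ifs <;> first | (exfalso; omega) | norm_num
        rw [hcomb]
        exact (convex_convexHull ℝ _) m1 m2 (by norm_num) (by norm_num) (by norm_num)
      · show ∑ e, (HP.wgt m e : ℝ) * HP.xstar m e = 1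
        rw [HP.wsum m hm, hx0, hx1, hx2]
        norm_num
    · rintro y hy z hz hseg
      obtain ⟨⟨hy1, hy2⟩, hy3⟩ := hy
      obtain ⟨⟨hz1, hz2⟩, hz3⟩ := hz
      obtain ⟨hy1a, hy1b⟩ := HP.mem_basePolytope_props _ (HP.tau1_inv m) (HP.tau1_ne m) y hy1
      obtain ⟨-, hy2b⟩ := HP.mem_basePolytope_props _ (HP.tau2_inv m) (HP.tau2_ne m) y hy2
      obtain ⟨hz1a, hz1b⟩ := HP.mem_basePolytope_props _ (HP.tau1_inv m) (HP.tau1_ne m) z hz1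
      obtain ⟨-, hz2b⟩ := HP.mem_basePolytope_props _ (HP.tau2_inv m) (HP.tau2_ne m) z hz2
      have hcy := HP.chainAll m hm y hy1b hy2b
      have hcz := HP.chainAll m hm z hz1b hz2b
      obtain ⟨a, b, ha, hb, hab, hsum⟩ := hseg
      have h0 : a * y ⟨0, by omega⟩ + b * z ⟨0, by omega⟩ = 0 := by
        have hc := congrFun hsum ⟨0, by omega⟩
        simp only [Pi.add_apply, Pi.smul_apply, smul_eq_mul] at hc
        rw [hx0] at hc
        exact hc
      have hy0 : y ⟨0, by omega⟩ = 0 := by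
        have h1 : 0 ≤ a * y ⟨0, by omega⟩ := mul_nonneg ha.le (hy1a _)
        have h2 : 0 ≤ b * z ⟨0, by omega⟩ := mul_nonneg hb.le (hz1a _)
        have h3 : a * y ⟨0, by omega⟩ = 0 := by linarith
        rcases mul_eq_zero.1 h3 with h | h
        · exact absurd h (ne_of_gt ha)
        · exact h
      have hz0 : z ⟨0, by omega⟩ = 0 := by
        have h1 : 0 ≤ a * y ⟨0, by omega⟩ := mul_nonneg ha.le (hy1a _)
        have h2 : 0 ≤ b * z ⟨0, by omega⟩ := mul_nonneg hb.le (hz1a _)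
        have h3 : b * z ⟨0, by omega⟩ = 0 := by linarith
        rcases mul_eq_zero.1 h3 with h | h
        · exact absurd h (ne_of_gt hb)
        · exact h
      rw [Set.mem_setOf_eq, HP.wsum m hm] at hy3 hz3
      have hyE2 : y ⟨2*m+2, by omega⟩ = y ⟨2*m, by omega⟩ := by
        rw [hcy (2*m+2) (by omega), if_neg (by omega), if_pos (by omega)]
      have hzE2 : z ⟨2*m+2, by omega⟩ = z ⟨2*m, by omega⟩ := by
        rw [hcz (2*m+2) (by omega), if_neg (by omega), if_pos (by omega)]
      rw [hyE2, hy0] at hy3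
      rw [hzE2, hz0] at hz3
      have hy1' : y ⟨2*m, by omega⟩ = 1/2 := by linarith
      have hz1' : z ⟨2*m, by omega⟩ = 1/2 := by linarith
      constructor
      · funext e
        obtain ⟨v, hv⟩ := e
        rw [hcy v hv, hy0, hy1']
        have hval : ((⟨v, hv⟩ : Fin (4*m)) : ℕ) = v := rfl
        show _ = HP.xstar m ⟨v, hv⟩
        simp only [HP.xstar, hval]
        split_ifs <;> norm_num
      · funext e
        obtain ⟨v, hv⟩ := e
        rw [hcz v hv, hz0, hz1']
        have hval : ((⟨v, hv⟩ : Fin (4*m)) : ℕ) = v := rfl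
        show _ = HP.xstar m ⟨v, hv⟩
        simp only [HP.xstar, hval]
        split_ifs <;> norm_num
  · -- sum of weights over Bset
    rw [HP.wsumZ m hm]
    have h0 : (⟨0, by omega⟩ : Fin (4*m)) ∈ HP.Bset m := by
      simp only [HP.Bset, Finset.mem_filter, Finset.mem_univ, true_and]
      left
      exact ⟨by omega, by norm_num⟩
    have h1 : (⟨2*m, by omega⟩ : Fin (4*m)) ∉ HP.Bset m := by
      simp only [HP.Bset, Finset.mem_filter, Finset.mem_univ, true_and]
      push_neg
      constructor
      · intro h; exfalso; omega
      · intro h; omega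
    have h2 : (⟨2*m+2, by omega⟩ : Fin (4*m)) ∉ HP.Bset m := by
      simp only [HP.Bset, Finset.mem_filter, Finset.mem_univ, true_and]
      push_neg
      constructor
      · intro h; exfalso; omega
      · intro h; omega
    rw [if_pos h0, if_neg h1, if_neg h2]
    ring
  · -- uniqueness
    intro C hC1 hC2 hwC
    have hCp1 := HP.mem_basePolytope_props _ (HP.tau1_inv m) (HP.tau1_ne m) (chi C)
      (subset_convexHull ℝ _ ⟨C, hC1, rfl⟩)
    have hCp2 := HP.mem_basePolytope_props _ (HP.tau2_inv m) (HP.tau2_ne m) (chi C)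
      (subset_convexHull ℝ _ ⟨C, hC2, rfl⟩)
    have hcC := HP.chainAll m hm (chi C) hCp1.2 hCp2.2
    have hE2E1 : ((⟨2*m+2, by omega⟩ : Fin (4*m)) ∈ C) ↔
        ((⟨2*m, by omega⟩ : Fin (4*m)) ∈ C) := by
      have h := hcC (2*m+2) (by omega)
      rw [if_neg (by omega), if_pos (by omega)] at h
      by_cases hb : (⟨2*m, by omega⟩ : Fin (4*m)) ∈ C <;>
        by_cases hd : (⟨2*m+2, by omega⟩ : Fin (4*m)) ∈ C <;>
        simp [chi, hb, hd] at h ⊢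
    rw [HP.wsumZ m hm] at hwC
    by_cases hB2 : (⟨2*m, by omega⟩ : Fin (4*m)) ∈ C
    · exfalso
      have hD : (⟨2*m+2, by omega⟩ : Fin (4*m)) ∈ C := hE2E1.2 hB2
      rw [if_pos hB2, if_pos hD] at hwC
      split_ifs at hwC <;> omega
    · have hD : (⟨2*m+2, by omega⟩ : Fin (4*m)) ∉ C := fun h => hB2 (hE2E1.1 h)
      rw [if_neg hB2, if_neg hD] at hwC
      have hA : (⟨0, by omega⟩ : Fin (4*m)) ∈ C := by
        by_contra hA
        rw [if_neg hA] at hwC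
        norm_num at hwC
      apply Finset.ext
      intro e
      obtain ⟨v, hv⟩ := e
      have h := hcC v hv
      have hA1 : chi C ⟨0, by omega⟩ = 1 := by simp [chi, hA]
      have hB0 : chi C ⟨2*m, by omega⟩ = 0 := by simp [chi, hB2]
      rw [hA1, hB0] at h
      have hval : ((⟨v, hv⟩ : Fin (4*m)) : ℕ) = v := rfl
      simp only [HP.Bset, Finset.mem_filter, Finset.mem_univ, true_and, hval]
      by_cases hmem : (⟨v, hv⟩ : Fin (4*m)) ∈ C
      · simp only [chi, if_pos hmem] at h
        simp only [hmem, true_iff]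
        split_ifs at h with h1 h2 h2
        · left; exact ⟨h1, h2⟩
        · norm_num at h
        · norm_num at h
        · right; constructor <;> omega
      · simp only [chi, if_neg hmem] at h
        simp only [hmem, false_iff]
        split_ifs at h with h1 h2 h2 <;> try norm_num at h
        all_goals omega
  · -- distance
    have hpt : ∀ e : Fin (4*m), |HP.xstar m e - chi (HP.Bset m) e| =
        if (e : ℕ) < 2*m then (1:ℝ) else 1/2 := by
      intro e
      have hlt := e.isLt
      simp only [HP.xstar, chi, HP.Bset, Finset.mem_filter, Finset.mem_univ, true_and]
      split_ifs <;> first | (exfalso; omega) | norm_num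
    calc ∑ e, |HP.xstar m e - chi (HP.Bset m) e|
        = ∑ e : Fin (4*m), (if (e : ℕ) < 2*m then (1:ℝ) else 1/2) :=
          Finset.sum_congr rfl (fun e _ => hpt e)
      _ = ∑ v ∈ Finset.range (4*m), (if v < 2*m then (1:ℝ) else 1/2) :=
          Fin.sum_univ_eq_sum_range (fun v => if v < 2*m then (1:ℝ) else 1/2) (4*m)
      _ = 3 / 4 * ((4*m : ℕ) : ℝ) := by
          rw [show 4*m = 2*m + 2*m from by ring]
          rw [Finset.sum_range_add]
          have e1 : ∑ v ∈ Finset.range (2*m), (if v < 2*m then (1:ℝ) else 1/2) =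
              ∑ _v ∈ Finset.range (2*m), (1:ℝ) :=
            Finset.sum_congr rfl (fun v hv => if_pos (Finset.mem_range.1 hv))
          have e2 : ∑ v ∈ Finset.range (2*m), (if 2*m + v < 2*m then (1:ℝ) else 1/2) =
              ∑ _v ∈ Finset.range (2*m), (1/2:ℝ) :=
            Finset.sum_congr rfl (fun v _ => if_neg (by omega))
          rw [e1, e2, Finset.sum_const, Finset.sum_const, Finset.card_range]
          push_cast [nsmul_eq_mul]
          ring
end
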